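/- arXiv:1012.4152 — 9 statements merged into one kernel-verified Lean document; each statement's English description precedes it below -/
import Mathlib

section
/- For every n ≥ 5 there exists a K_{2,3}-saturated graph on n vertices with exactly 2n − 3 edges. -/
/-!
Take the join of a vertex with `H = C_m ⊔ K_k`, where `(m, k) = (n - 2, 1)`, or `(3, 2)` when
`n = 6` (the join with `C_4` contains a `K_{2,3}`). A `K_{2,3}` is a pair of vertices with three
common neighbours. In `H` every vertex has at most two neighbours and two distinct vertices have at
most one common neighbour, so any two vertices of the join have at most two common neighbours. If
`u` and `v` are non-adjacent in `H`, one of them, say `v`, lies on the cycle; once `uv` is added, the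
apex and `v` have the three common neighbours `u` and the two cycle neighbours of `v`. The join has
`(n - 1) + m + k(k - 1)/2 = 2n - 3` edges.
-/

open SimpleGraph

/-- `G` contains a subgraph isomorphic to the complete bipartite graph `K_{2,3}`. -/
def HasK23 {V : Type*} (G : SimpleGraph V) : Prop :=
  ∃ f : (Fin 2 ⊕ Fin 3) ↪ V,
    ∀ a b, (completeBipartiteGraph (Fin 2) (Fin 3)).Adj a b → G.Adj (f a) (f b)

/-- `G` is `K_{2,3}`-saturated: `K_{2,3}`-free, but adding any edge between two
non-adjacent vertices creates a `K_{2,3}`. -/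
def K23Saturated {V : Type*} (G : SimpleGraph V) : Prop :=
  ¬ HasK23 G ∧ ∀ u v : V, u ≠ v → ¬ G.Adj u v →
    HasK23 (G ⊔ SimpleGraph.fromEdgeSet {s(u, v)})

namespace SimpleGraph

variable {V W : Type*}

theorem hasK23_iff_exists_three_le_encard_commonNeighbors {G : SimpleGraph V} :
    HasK23 G ↔ ∃ a b, a ≠ b ∧ 3 ≤ (G.commonNeighbors a b).encard := by
  constructor
  · rintro ⟨f, hf⟩
    have hadj : ∀ i j, G.Adj (f (.inl i)) (f (.inr j)) := fun i j => hf _ _ (by simp)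
    refine ⟨f (.inl 0), f (.inl 1), by simp, ?_⟩
    calc (3 : ℕ∞) = ({f (.inr 0), f (.inr 1), f (.inr 2)} : Set V).encard :=
          (Set.encard_eq_three.mpr ⟨_, _, _, by simp, by simp, by simp, rfl⟩).symm
      _ ≤ _ := Set.encard_le_encard <| by
          simp only [Set.insert_subset_iff, Set.singleton_subset_iff, mem_commonNeighbors]
          exact ⟨⟨hadj 0 0, hadj 1 0⟩, ⟨hadj 0 1, hadj 1 1⟩, ⟨hadj 0 2, hadj 1 2⟩⟩
  · rintro ⟨a, b, hab, h3⟩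
    obtain ⟨s, hs, hs3⟩ := Set.exists_subset_encard_eq h3
    obtain ⟨x, y, z, hxy, hxz, hyz, rfl⟩ := Set.encard_eq_three.mp hs3
    simp only [Set.insert_subset_iff, Set.singleton_subset_iff, mem_commonNeighbors] at hs
    obtain ⟨⟨hax, hbx⟩, ⟨hay, hby⟩, ⟨haz, hbz⟩⟩ := hs
    refine ⟨⟨Sum.elim ![a, b] ![x, y, z], ?_⟩, ?_⟩
    · refine Function.Injective.sumElim ?_ ?_ ?_ <;> intro i j <;> fin_cases i <;> fin_cases j <;>
        simp [hab, hab.symm, hxy, hxz, hyz, hxy.symm, hxz.symm, hyz.symm, hax.ne, hay.ne, haz.ne,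
          hbx.ne, hby.ne, hbz.ne]
    · have hadj : ∀ i j, G.Adj (![a, b] i) (![x, y, z] j) := by
        intro i j
        fin_cases i <;> fin_cases j <;> assumption
      rintro (i | i) (j | j) h
      · simp at h
      · exact hadj i j
      · exact (hadj j i).symm
      · simp at h

theorem Iso.ncard_edgeSet_eq {G : SimpleGraph V} {G' : SimpleGraph W} (e : G ≃g G') :
    G.edgeSet.ncard = G'.edgeSet.ncard := by
  simp only [← Nat.card_coe_set_eq]
  exact Nat.card_congr e.mapEdgeSet

theorem HasK23.of_injective_hom {G : SimpleGraph V} {G' : SimpleGraph W} (h : HasK23 G)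
    (f : V ↪ W) (hf : ∀ a b, G.Adj a b → G'.Adj (f a) (f b)) : HasK23 G' :=
  let ⟨g, hg⟩ := h
  ⟨g.trans f, fun a b hab => hf _ _ (hg a b hab)⟩

theorem K23Saturated.of_iso {G : SimpleGraph V} {G' : SimpleGraph W} (e : G ≃g G')
    (h : K23Saturated G) : K23Saturated G' := by
  refine ⟨fun h' => h.1 (h'.of_injective_hom e.symm.toEmbedding.toEmbedding
    fun a b => e.symm.map_adj_iff.mpr), fun u v huv hadj => ?_⟩
  refine (h.2 (e.symm u) (e.symm v) (by simpa using huv)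
    fun h => hadj (e.symm.map_adj_iff.mp h)).of_injective_hom
    e.toEmbedding.toEmbedding fun a b hab => ?_
  simp only [sup_adj, fromEdgeSet_adj, Set.mem_singleton_iff, Sym2.eq_iff] at hab ⊢
  rcases hab with hab | ⟨⟨rfl, rfl⟩ | ⟨rfl, rfl⟩, -⟩
  · exact Or.inl (e.map_adj_iff.mpr hab)
  · simp [huv]
  · simp [huv.symm]

/-- The join of a single vertex `none` with `H`. -/
def cone (H : SimpleGraph W) : SimpleGraph (Option W) :=
  H.map Function.Embedding.some ⊔ starGraph none

variable {H : SimpleGraph W}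

@[simp] theorem cone_adj_some_some {v w : W} : (cone H).Adj (some v) (some w) ↔ H.Adj v w := by
  simpa [cone, starGraph_adj] using map_adj_apply (f := Function.Embedding.some)

@[simp] theorem cone_adj_none_some {w : W} : (cone H).Adj none (some w) := by
  simp [cone, starGraph_adj]

@[simp] theorem cone_adj_some_none {w : W} : (cone H).Adj (some w) none := by
  simp [cone, starGraph_adj]

theorem commonNeighbors_cone_none_some (w : W) :
    (cone H).commonNeighbors none (some w) = some '' H.neighborSet w := by
  ext (_ | v) <;> simp [mem_commonNeighbors]

theorem commonNeighbors_cone_some_some (v w : W) :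
    (cone H).commonNeighbors (some v) (some w) = insert none (some '' H.commonNeighbors v w) := by
  ext (_ | u) <;> simp [mem_commonNeighbors]

theorem encard_commonNeighbors_cone_le_two (hdeg : ∀ v, (H.neighborSet v).encard ≤ 2)
    (hC4 : ∀ v w, v ≠ w → (H.commonNeighbors v w).encard ≤ 1) {x y : Option W} (hxy : x ≠ y) :
    ((cone H).commonNeighbors x y).encard ≤ 2 := by
  have hnone (w : W) : ((cone H).commonNeighbors none (some w)).encard ≤ 2 := by
    rw [commonNeighbors_cone_none_some, (Option.some_injective W).encard_image]
    exact hdeg w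
  rcases x with _ | v <;> rcases y with _ | w
  · exact absurd rfl hxy
  · exact hnone w
  · rw [commonNeighbors_symm]
    exact hnone v
  · rw [commonNeighbors_cone_some_some]
    calc _ ≤ (some '' H.commonNeighbors v w).encard + 1 := Set.encard_insert_le _ _
      _ ≤ 1 + 1 := by
        rw [(Option.some_injective W).encard_image]
        gcongr
        exact hC4 v w (by simpa using hxy)
      _ = 2 := one_add_one_eq_two

theorem not_hasK23_cone (hdeg : ∀ v, (H.neighborSet v).encard ≤ 2)
    (hC4 : ∀ v w, v ≠ w → (H.commonNeighbors v w).encard ≤ 1) : ¬HasK23 (cone H) := by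
  rw [hasK23_iff_exists_three_le_encard_commonNeighbors]
  rintro ⟨x, y, hxy, h3⟩
  have := h3.trans (encard_commonNeighbors_cone_le_two hdeg hC4 hxy)
  norm_num at this

theorem hasK23_cone_sup_edge {v w : W} (hne : v ≠ w) (hvw : ¬H.Adj v w)
    (hw : 2 ≤ (H.neighborSet w).encard) :
    HasK23 (cone H ⊔ fromEdgeSet {s(some v, some w)}) := by
  rw [hasK23_iff_exists_three_le_encard_commonNeighbors]
  refine ⟨none, some w, by simp, ?_⟩
  have hsub : insert (some v) ((cone H).commonNeighbors none (some w)) ⊆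
      (cone H ⊔ fromEdgeSet {s(some v, some w)}).commonNeighbors none (some w) := by
    rintro x (rfl | ⟨hx, hwx⟩)
    · exact ⟨Or.inl cone_adj_none_some,
        Or.inr (by simp [fromEdgeSet_adj, Sym2.eq_swap, hne.symm])⟩
    · exact ⟨Or.inl hx, Or.inl hwx⟩
  calc (3 : ℕ∞) = 2 + 1 := rfl
    _ ≤ ((cone H).commonNeighbors none (some w)).encard + 1 := by
        rw [commonNeighbors_cone_none_some, (Option.some_injective W).encard_image]
        gcongr
    _ = _ := (Set.encard_insert_of_notMem <| by
        simpa [commonNeighbors_cone_none_some] using fun h => hvw h.symm).symm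
    _ ≤ _ := Set.encard_le_encard hsub

theorem k23Saturated_cone (hdeg : ∀ v, (H.neighborSet v).encard ≤ 2)
    (hC4 : ∀ v w, v ≠ w → (H.commonNeighbors v w).encard ≤ 1)
    (hsat : ∀ v w, v ≠ w → ¬H.Adj v w →
      2 ≤ (H.neighborSet v).encard ∨ 2 ≤ (H.neighborSet w).encard) :
    K23Saturated (cone H) := by
  refine ⟨not_hasK23_cone hdeg hC4, ?_⟩
  rintro (_ | v) (_ | w) hne hadj
  · exact absurd rfl hne
  · exact absurd cone_adj_none_some hadj
  · exact absurd cone_adj_some_none hadj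
  · have hvw : v ≠ w := by simpa using hne
    rw [cone_adj_some_some] at hadj
    rcases hsat v w hvw hadj with hv | hw
    · rw [Sym2.eq_swap]
      exact hasK23_cone_sup_edge hvw.symm (fun h => hadj h.symm) hv
    · exact hasK23_cone_sup_edge hvw hadj hw

section Sum

variable {G : SimpleGraph V} {k : ℕ∞}

theorem encard_neighborSet_sum_le (hG : ∀ v, (G.neighborSet v).encard ≤ k)
    (hH : ∀ w, (H.neighborSet w).encard ≤ k) (x : V ⊕ W) :
    ((G ⊕g H).neighborSet x).encard ≤ k := by
  rcases x with v | w
  · rw [neighborSet_sum_inl, Sum.inl_injective.encard_image]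
    exact hG v
  · rw [neighborSet_sum_inr, Sum.inr_injective.encard_image]
    exact hH w

theorem encard_commonNeighbors_sum_le (hG : ∀ v v', v ≠ v' → (G.commonNeighbors v v').encard ≤ k)
    (hH : ∀ w w', w ≠ w' → (H.commonNeighbors w w').encard ≤ k) {x y : V ⊕ W} (hxy : x ≠ y) :
    ((G ⊕g H).commonNeighbors x y).encard ≤ k := by
  rcases x with v | w <;> rcases y with v' | w' <;>
    simp only [commonNeighbors_eq, neighborSet_sum_inl, neighborSet_sum_inr] at hxy ⊢
  · rw [← Set.image_inter Sum.inl_injective, Sum.inl_injective.encard_image]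
    exact hG v v' (by simpa using hxy)
  · simp [Set.disjoint_image_inl_image_inr.inter_eq]
  · simp [Set.disjoint_image_inl_image_inr.symm.inter_eq]
  · rw [← Set.image_inter Sum.inr_injective, Sum.inr_injective.encard_image]
    exact hH w w' (by simpa using hxy)

theorem two_le_encard_neighborSet_sum_top_of_not_adj {β : Type*}
    (hG : ∀ v, 2 ≤ (G.neighborSet v).encard) {x y : V ⊕ β} (hxy : x ≠ y)
    (hadj : ¬(G ⊕g (⊤ : SimpleGraph β)).Adj x y) :
    2 ≤ ((G ⊕g ⊤).neighborSet x).encard ∨ 2 ≤ ((G ⊕g ⊤).neighborSet y).encard := by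
  rcases x with v | a
  · left
    rw [neighborSet_sum_inl, Sum.inl_injective.encard_image]
    exact hG v
  rcases y with v | b
  · right
    rw [neighborSet_sum_inl, Sum.inl_injective.encard_image]
    exact hG v
  · simp_all

end Sum

theorem encard_neighborSet_cycleGraph {m : ℕ} (hm : 3 ≤ m) (v : Fin m) :
    ((cycleGraph m).neighborSet v).encard = 2 := by
  obtain ⟨n, rfl⟩ : ∃ n, m = n + 3 := ⟨m - 3, by omega⟩
  rw [← coe_neighborFinset, Set.encard_coe_eq_coe_finsetCard, card_neighborFinset_eq_degree,
    cycleGraph_degree_three_le]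
  rfl

theorem encard_commonNeighbors_cycleGraph_le_one {m : ℕ} (h3 : 3 ≤ m) (h4 : m ≠ 4) {v w : Fin m}
    (hvw : v ≠ w) : ((cycleGraph m).commonNeighbors v w).encard ≤ 1 := by
  obtain ⟨n, rfl⟩ : ∃ n, m = n + 2 := ⟨m - 2, by omega⟩
  have four_ne_zero : (4 : Fin (n + 2)) ≠ 0 := by
    rw [Ne, Fin.ext_iff, Fin.val_zero]
    simp only [Fin.coe_ofNat_eq_mod]
    intro h
    have := Nat.le_of_dvd (by norm_num) (Nat.dvd_of_mod_eq_zero h)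
    obtain rfl : n = 1 := by omega
    simp at h
  -- a common neighbour `c` of `v ≠ w` has `{v, w} = {c - 1, c + 1}`, so two of them differ by `±2`
  -- in both directions, forcing `4 = 0`
  rw [Set.encard_le_one_iff]
  intro a b ha hb
  simp only [commonNeighbors_eq, cycleGraph_neighborSet, Set.mem_inter_iff, Set.mem_insert_iff,
    Set.mem_singleton_iff] at ha hb
  grind

section CompleteGraph

variable {α : Type*} (hα : ENat.card α ≤ 3)
include hα

theorem encard_neighborSet_top_le (a : α) : ((⊤ : SimpleGraph α).neighborSet a).encard ≤ 2 := by
  have hcard := Set.encard_add_encard_compl {a}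
  rw [Set.encard_singleton, Set.encard_univ] at hcard
  rw [neighborSet_top, ← ENat.add_le_add_iff_left ENat.one_ne_top, hcard]
  exact hα

theorem encard_commonNeighbors_top_le {a b : α} (hab : a ≠ b) :
    ((⊤ : SimpleGraph α).commonNeighbors a b).encard ≤ 1 := by
  have hcard := Set.encard_sdiff_add_encard_of_subset (Set.subset_univ {a, b})
  rw [Set.encard_pair hab, Set.encard_univ] at hcard
  rw [commonNeighbors_top_eq, ← ENat.add_le_add_iff_right (k := 2) (by simp), hcard]
  exact hα

end CompleteGraph

theorem k23Saturated_cone_cycleGraph_sum_top {m : ℕ} (h3 : 3 ≤ m) (h4 : m ≠ 4) {α : Type*}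
    (hα : ENat.card α ≤ 3) : K23Saturated (cone (cycleGraph m ⊕g (⊤ : SimpleGraph α))) :=
  k23Saturated_cone
    (encard_neighborSet_sum_le (fun v => (encard_neighborSet_cycleGraph h3 v).le)
      (encard_neighborSet_top_le hα))
    (fun _ _ => encard_commonNeighbors_sum_le
      (fun _ _ => encard_commonNeighbors_cycleGraph_le_one h3 h4)
      (fun _ _ => encard_commonNeighbors_top_le hα))
    (fun _ _ => two_le_encard_neighborSet_sum_top_of_not_adj
      (fun v => (encard_neighborSet_cycleGraph h3 v).ge))

theorem ncard_edgeSet_cone [Finite W] : (cone H).edgeSet.ncard = Nat.card W + H.edgeSet.ncard := by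
  have hstar : (starGraph (none : Option W)).edgeSet.ncard = Nat.card W := by
    have := (isTree_iff_connected_and_card.mp (isTree_starGraph (none : Option W))).2
    rw [Finite.card_option, Nat.card_coe_set_eq] at this
    omega
  have hmap : (H.map Function.Embedding.some).edgeSet.ncard = H.edgeSet.ncard := by
    rw [edgeSet_map, Set.ncard_image_of_injective _ Function.Embedding.some.sym2Map.injective]
  have hdisj : Disjoint (H.map Function.Embedding.some) (starGraph none) := by
    rw [disjoint_left]
    rintro (_ | v) (_ | w) <;> simp [starGraph_adj, map_adj']
  rw [cone, edgeSet_sup, Set.ncard_union_eq (disjoint_edgeSet.mpr hdisj), hmap, hstar, add_comm]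

theorem ncard_edgeSet_sum [Finite V] [Finite W] (G : SimpleGraph V) (H : SimpleGraph W) :
    (G ⊕g H).edgeSet.ncard = G.edgeSet.ncard + H.edgeSet.ncard := by
  simp only [← Nat.card_coe_set_eq, Nat.card_congr edgeSetSumEquiv, Nat.card_sum]

theorem ncard_edgeSet_cycleGraph {m : ℕ} (hm : 3 ≤ m) : (cycleGraph m).edgeSet.ncard = m := by
  obtain ⟨n, rfl⟩ : ∃ n, m = n + 3 := ⟨m - 3, by omega⟩
  have := (cycleGraph (n + 3)).sum_degrees_eq_twice_card_edges
  simp only [cycleGraph_degree_three_le, Finset.sum_const, Finset.card_univ, Fintype.card_fin,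
    smul_eq_mul] at this
  rw [← coe_edgeFinset, Set.ncard_coe_finset]
  omega

theorem ncard_edgeSet_top_fin (k : ℕ) : (⊤ : SimpleGraph (Fin k)).edgeSet.ncard = k.choose 2 := by
  rw [← coe_edgeFinset, Set.ncard_coe_finset, card_edgeFinset_top_eq_card_choose_two,
    Fintype.card_fin]

end SimpleGraph

theorem sat_K23_upper_bound (n : ℕ) (hn : 5 ≤ n) :
    ∃ G : SimpleGraph (Fin n), K23Saturated G ∧ G.edgeSet.ncard = 2 * n - 3 := by
  obtain ⟨m, k, h3, h4, hk, rfl⟩ : ∃ m k, 3 ≤ m ∧ m ≠ 4 ∧ (k = 1 ∨ k = 2) ∧ n = m + k + 1 := by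
    rcases eq_or_ne n 6 with rfl | h6
    · exact ⟨3, 2, le_rfl, by norm_num, Or.inr rfl, rfl⟩
    · exact ⟨n - 2, 1, by omega, by omega, Or.inl rfl, by omega⟩
  let G := cone (cycleGraph m ⊕g (⊤ : SimpleGraph (Fin k)))
  have hcard : Fintype.card (Option (Fin m ⊕ Fin k)) = m + k + 1 := by simp
  have hα : ENat.card (Fin k) ≤ 3 := by
    rw [ENat.card_eq_coe_fintype_card, Fintype.card_fin]
    exact_mod_cast (show k ≤ 3 by omega)
  refine ⟨G.overFin hcard,
    (k23Saturated_cone_cycleGraph_sum_top h3 h4 hα).of_iso (G.overFinIso hcard), ?_⟩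
  rw [← (G.overFinIso hcard).ncard_edgeSet_eq, ncard_edgeSet_cone, ncard_edgeSet_sum,
    ncard_edgeSet_cycleGraph h3, ncard_edgeSet_top_fin, Nat.card_sum, Nat.card_fin, Nat.card_fin]
  have hchoose : k.choose 2 = k - 1 := by
    rcases hk with rfl | rfl <;> rfl
  omega
end

section
/- Let G be a K_{2,3}-saturated graph. If α₁ and α₂ are distinct non-adjacent vertices of G, then for some i ∈ {1,2} there exists a vertex b adjacent to α_i such that b and α_{3−i} have at least two common neighbors in G. -/
open SimpleGraph

/-! The `K_{2,3}` created by adding the edge `α₁α₂` must use that edge, so one `αᵢ` lies in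
its part of size two and the other in its part of size three. The second vertex `b` of the
small part is then a neighbour of `α₃₋ᵢ`, and the two remaining vertices of the large part are
common neighbours of `αᵢ` and `b`. -/

lemma SimpleGraph.adj_of_sup_edge_adj {V : Type*} {G : SimpleGraph V} {x y z w : V}
    (h : (G ⊔ edge x y).Adj z w) (hzx : z ≠ x) (hzy : z ≠ y) :
    G.Adj z w := by
  rcases h with h | h
  · exact h
  · rw [edge_adj] at h
    rcases h.1 with ⟨rfl, -⟩ | ⟨rfl, -⟩ <;> contradiction

lemma exists_cross_edge_eq_of_not_hasK23 {V : Type*} {G : SimpleGraph V} {x y : V}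
    (hG : ¬ HasK23 G) (f : (Fin 2 ⊕ Fin 3) ↪ V)
    (hf : ∀ p q, (completeBipartiteGraph (Fin 2) (Fin 3)).Adj p q →
      (G ⊔ edge x y).Adj (f p) (f q)) :
    ∃ a b, s(f (.inl a), f (.inr b)) = s(x, y) := by
  by_contra hnew
  simp only [not_exists] at hnew
  refine hG ⟨f, fun p q hpq => ?_⟩
  rcases hf p q hpq with h | h
  · exact h
  rw [edge_adj] at h
  rcases p with a | b <;> rcases q with a' | b'
  · simp at hpq
  · exact absurd (Sym2.eq_iff.mpr h.1) (hnew a b')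
  · exact absurd (Sym2.eq_swap.trans (Sym2.eq_iff.mpr h.1)) (hnew a' b)
  · simp at hpq

lemma exists_adj_two_le_ncard_common_neighbors {α β V : Type*} [Finite V] {G : SimpleGraph V}
    {x y : V} (f : (α ⊕ β) ↪ V)
    (hf : ∀ p q, (completeBipartiteGraph α β).Adj p q → (G ⊔ edge x y).Adj (f p) (f q))
    {a a' : α} {b b₁ b₂ : β} (ha' : a' ≠ a) (hb₁ : b₁ ≠ b) (hb₂ : b₂ ≠ b) (hb₁₂ : b₁ ≠ b₂)
    (hx : f (.inl a) = x) (hy : f (.inr b) = y) :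
    ∃ c, G.Adj y c ∧ 2 ≤ (G.neighborSet x ∩ G.neighborSet c).ncard := by
  have hcx : f (.inl a') ≠ x := hx ▸ by simpa using ha'
  have hcy : f (.inl a') ≠ y := hy ▸ by simp
  have hx_ne (k : β) : f (.inr k) ≠ x := hx ▸ by simp
  have hy_ne {k : β} (hk : k ≠ b) : f (.inr k) ≠ y := hy ▸ by simpa using hk
  have hadj (p q) (hpq : (completeBipartiteGraph α β).Adj p q) (hpx : f p ≠ x) (hpy : f p ≠ y) :
      G.Adj (f p) (f q) :=
    adj_of_sup_edge_adj (hf p q hpq) hpx hpy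
  have hcommon {k : β} (hk : k ≠ b) :
      f (.inr k) ∈ G.neighborSet x ∩ G.neighborSet (f (.inl a')) :=
    ⟨(hx ▸ hadj (.inr k) (.inl a) (by simp) (hx_ne k) (hy_ne hk)).symm,
      hadj (.inl a') (.inr k) (by simp) hcx hcy⟩
  refine ⟨f (.inl a'), (hy ▸ hadj (.inl a') (.inr b) (by simp) hcx hcy).symm, ?_⟩
  exact (Set.one_lt_ncard_iff (Set.toFinite _)).mpr
    ⟨_, _, hcommon hb₁, hcommon hb₂, by simpa using hb₁₂⟩

theorem common_neighbors_of_nonadjacent {V : Type*} [Fintype V] (G : SimpleGraph V)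
    (hG : K23Saturated G) (α₁ α₂ : V) (hne : α₁ ≠ α₂) (hnadj : ¬ G.Adj α₁ α₂) :
    (∃ b, G.Adj α₁ b ∧ 2 ≤ (G.neighborSet α₂ ∩ G.neighborSet b).ncard) ∨
    (∃ b, G.Adj α₂ b ∧ 2 ≤ (G.neighborSet α₁ ∩ G.neighborSet b).ncard) := by
  obtain ⟨hfree, hsat⟩ := hG
  obtain ⟨f, hf⟩ := hsat α₁ α₂ hne hnadj
  obtain ⟨a, b, hab⟩ := exists_cross_edge_eq_of_not_hasK23 hfree f hf
  have ha' : a + 1 ≠ a := by fin_cases a <;> decide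
  have hb : b + 1 ≠ b ∧ b + 2 ≠ b ∧ b + 1 ≠ b + 2 := by fin_cases b <;> decide
  rcases Sym2.eq_iff.mp hab with ⟨hx, hy⟩ | ⟨hx, hy⟩
  · exact .inr (exists_adj_two_le_ncard_common_neighbors f hf ha' hb.1 hb.2.1 hb.2.2 hx hy)
  · replace hf : ∀ p q, (completeBipartiteGraph (Fin 2) (Fin 3)).Adj p q →
        (G ⊔ edge α₂ α₁).Adj (f p) (f q) := by rwa [← edge_comm]
    exact .inl (exists_adj_two_le_ncard_common_neighbors f hf ha' hb.1 hb.2.1 hb.2.2 hx hy)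
end

section
/- Let G be a K_{2,3}-saturated graph, α a vertex of G with neighborhood N(α) = {x₁, ..., x_k}, and y a vertex outside the closed neighborhood N[α]. Then either there exists an index l with |N(y) ∩ N(x_l)| ≥ 2, or there exist distinct indices i ≠ j such that y is adjacent to some vertex in N(x_i) ∩ N(x_j). -/
/-!
Saturation applied to the non-edge `αy` yields a copy of `K_{2,3}` in `G + αy`. As `G` itself is
`K_{2,3}`-free, this copy uses the edge `αy`, so `G` contains `K_{2,3}` minus the edge `αy`.
If `α` lies in the part of size two, the other vertex `w` of that part is a common neighbour of
two neighbours of `α` and is adjacent to `y`. If `y` lies in the part of size two, the other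
vertex `w` of that part is a neighbour of `α` sharing two neighbours with `y`.
-/

open SimpleGraph

namespace SimpleGraph

variable {V : Type*} {G : SimpleGraph V} {u v : V}

/-- `G` contains `K_{2,3}` minus the edge `uv`, with `u` in the part of size two and `v` in the
part of size three. -/
def HasK23MinusEdge (G : SimpleGraph V) (u v : V) : Prop :=
  ∃ w z₁ z₂, z₁ ≠ z₂ ∧ G.Adj u z₁ ∧ G.Adj u z₂ ∧ G.Adj w v ∧ G.Adj w z₁ ∧ G.Adj w z₂

theorem hasK23_of_forall_adj (f : Fin 2 ⊕ Fin 3 ↪ V)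
    (hf : ∀ a b, G.Adj (f (.inl a)) (f (.inr b))) : HasK23 G := by
  refine ⟨f, ?_⟩
  rintro (a | a) (b | b) hab
  · simp at hab
  · exact hf a b
  · exact (hf b a).symm
  · simp at hab

theorem hasK23MinusEdge_of_forall_adj (f : Fin 2 ⊕ Fin 3 ↪ V) (a : Fin 2) (b : Fin 3)
    (hf : ∀ a' b', (a' ≠ a ∨ b' ≠ b) → G.Adj (f (.inl a')) (f (.inr b'))) :
    G.HasK23MinusEdge (f (.inl a)) (f (.inr b)) := by
  obtain ⟨a', ha'⟩ : ∃ a', a' ≠ a := by clear hf; revert a; decide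
  obtain ⟨b₁, b₂, hb₁, hb₂, hb⟩ : ∃ b₁ b₂, b₁ ≠ b ∧ b₂ ≠ b ∧ b₁ ≠ b₂ := by
    clear hf; revert b; decide
  exact ⟨f (.inl a'), f (.inr b₁), f (.inr b₂), by simpa using hb, hf _ _ (.inr hb₁),
    hf _ _ (.inr hb₂), hf _ _ (.inl ha'), hf _ _ (.inl ha'), hf _ _ (.inl ha')⟩

theorem K23Saturated.hasK23MinusEdge (hG : K23Saturated G) (huv : u ≠ v) (hnadj : ¬G.Adj u v) :
    G.HasK23MinusEdge u v ∨ G.HasK23MinusEdge v u := by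
  obtain ⟨f, hf⟩ := hG.2 u v huv hnadj
  have hsup : ∀ a b, (G ⊔ fromEdgeSet {s(u, v)}).Adj (f (.inl a)) (f (.inr b)) :=
    fun a b ↦ hf _ _ (by simp)
  have hnew : ∀ a b, ¬G.Adj (f (.inl a)) (f (.inr b)) → s(f (.inl a), f (.inr b)) = s(u, v) := by
    intro a b hab
    simpa [hab] using hsup a b
  obtain ⟨a, b, hab⟩ : ∃ a b, ¬G.Adj (f (.inl a)) (f (.inr b)) := by
    by_contra! h
    exact hG.1 (hasK23_of_forall_adj f h)
  -- Only one pair of `K_{2,3}` can be mapped onto the new edge, since `f` is injective.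
  have hold : ∀ a' b', (a' ≠ a ∨ b' ≠ b) → G.Adj (f (.inl a')) (f (.inr b')) := by
    intro a' b' hne
    by_contra hab'
    have h := (hnew a' b' hab').trans (hnew a b hab).symm
    rw [← Sym2.map_mk, ← Sym2.map_mk] at h
    have : a' = a ∧ b' = b := by simpa using Sym2.map.injective f.injective h
    tauto
  have hK := hasK23MinusEdge_of_forall_adj f a b hold
  rcases Sym2.eq_iff.1 (hnew a b hab) with ⟨ha, hb⟩ | ⟨ha, hb⟩ <;> rw [ha, hb] at hK
  exacts [.inl hK, .inr hK]

end SimpleGraph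

theorem neighbors_structure_outside_closed_nbhd {V : Type*} [Fintype V]
    (G : SimpleGraph V) (hG : K23Saturated G) (α y : V)
    (hy : y ∉ insert α (G.neighborSet α)) :
    (∃ x ∈ G.neighborSet α, 2 ≤ (G.neighborSet y ∩ G.neighborSet x).ncard) ∨
    (∃ xi ∈ G.neighborSet α, ∃ xj ∈ G.neighborSet α, xi ≠ xj ∧
      ∃ z ∈ G.neighborSet xi ∩ G.neighborSet xj, G.Adj y z) := by
  obtain ⟨hαy, hnadj⟩ : α ≠ y ∧ ¬G.Adj α y := by
    simpa [not_or, eq_comm, G.adj_comm] using hy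
  rcases hG.hasK23MinusEdge hαy hnadj with
    ⟨w, z₁, z₂, hz, hαz₁, hαz₂, hwy, hwz₁, hwz₂⟩ | ⟨w, z₁, z₂, hz, hyz₁, hyz₂, hwα, hwz₁, hwz₂⟩
  · exact .inr ⟨z₁, hαz₁, z₂, hαz₂, hz, w, ⟨hwz₁.symm, hwz₂.symm⟩, hwy.symm⟩
  · refine .inl ⟨w, hwα.symm, ?_⟩
    calc 2 = ({z₁, z₂} : Set V).ncard := (Set.ncard_pair hz).symm
      _ ≤ _ := Set.ncard_le_ncard (by rintro z (rfl | rfl) <;> simp [*])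
end

section
/- Let G be a K_{2,3}-saturated graph, α a vertex of degree 1 with unique neighbor x, and y any vertex outside N[α] = {α, x}. Then y has at least two neighbors in N(x). -/
/-!
Since `G` is `K_{2,3}`-free, the copy of `K_{2,3}` created by adding the non-edge `αy` uses that
edge. In `G + αy` the vertex `α` has only the two neighbours `x` and `y`, so it lies in the part
of size three and `y` in the part of size two; the other vertex of that part is a neighbour of
`α` different from `y`, hence it is `x`. The two remaining vertices of the part of size three
are then common neighbours of `x` and `y`, already in `G` because they differ from `α`.
-/

open SimpleGraph

namespace SimpleGraph

variable {V : Type*} {G : SimpleGraph V} {u v a b : V}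

lemma adj_of_sup_edge_of_sym2_ne (h : (G ⊔ edge u v).Adj a b) (hne : s(a, b) ≠ s(u, v)) :
    G.Adj a b :=
  h.resolve_right fun h => hne ((adj_edge u v).1 h).1.symm

lemma adj_of_sup_edge_of_ne_of_ne (h : (G ⊔ edge u v).Adj a b) (ha : a ≠ u) (hb : b ≠ u) :
    G.Adj a b :=
  adj_of_sup_edge_of_sym2_ne h fun h => by rw [Sym2.eq_iff] at h; tauto

lemma neighborSet_sup_edge_subset :
    (G ⊔ edge u v).neighborSet u ⊆ insert v (G.neighborSet u) := by
  rintro a (h | h)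
  · exact .inr h
  · rw [edge_adj] at h
    exact .inl (by tauto)

end SimpleGraph

section K23

variable {V : Type*} {G H : SimpleGraph V} {f : (Fin 2 ⊕ Fin 3) ↪ V}

lemma exists_eq_edge_of_not_hasK23 {u v : V} (hG : ¬ HasK23 G)
    (hf : ∀ a b, (completeBipartiteGraph (Fin 2) (Fin 3)).Adj a b →
      (G ⊔ edge u v).Adj (f a) (f b)) :
    ∃ i j, s(f (.inl i), f (.inr j)) = s(u, v) := by
  contrapose! hG
  refine ⟨f, ?_⟩
  rintro (i | i) (j | j) hij
  · simp at hij
  · exact adj_of_sup_edge_of_sym2_ne (hf _ _ hij) (hG i j)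
  · exact adj_of_sup_edge_of_sym2_ne (hf _ _ hij) (Sym2.eq_swap ▸ hG j i)
  · simp at hij

lemma not_neighborSet_subset_pair
    (hf : ∀ a b, (completeBipartiteGraph (Fin 2) (Fin 3)).Adj a b → H.Adj (f a) (f b))
    (i : Fin 2) (a b : V) : ¬ H.neighborSet (f (.inl i)) ⊆ {a, b} := by
  classical
  intro h
  have hcard : (Finset.univ : Finset (Fin 3)).card ≤ ({a, b} : Finset V).card :=
    Finset.card_le_card_of_injOn (fun k => f (.inr k))
      (fun k _ => by simpa using h (hf _ _ (by simp)))
      (fun k _ l _ hkl => by simpa using f.injective hkl)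
  have := Finset.card_le_two (a := a) (b := b)
  simp only [Finset.card_univ, Fintype.card_fin] at hcard
  omega

lemma two_le_ncard_neighborSet_inter_of_sup_edge [Finite V] {u v x : V} (hG : ¬ HasK23 G)
    (hu : G.neighborSet u ⊆ {x})
    (hf : ∀ a b, (completeBipartiteGraph (Fin 2) (Fin 3)).Adj a b →
      (G ⊔ edge u v).Adj (f a) (f b)) :
    2 ≤ (G.neighborSet v ∩ G.neighborSet x).ncard := by
  have hNu : (G ⊔ edge u v).neighborSet u ⊆ {v, x} :=
    neighborSet_sup_edge_subset.trans (Set.insert_subset_insert hu)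
  obtain ⟨i, j, hij⟩ := exists_eq_edge_of_not_hasK23 hG hf
  obtain ⟨hv, hu'⟩ : f (.inl i) = v ∧ f (.inr j) = u := by
    rcases Sym2.eq_iff.1 hij with h | h
    · exact absurd (h.1 ▸ hNu) (not_neighborSet_subset_pair hf i v x)
    · exact h
  obtain ⟨i', hi'⟩ := exists_ne i
  have hx : f (.inl i') = x := by
    rcases hNu (show f (.inl i') ∈ _ from hu' ▸ (hf _ _ (by simp)).symm) with h | h
    · exact absurd (f.injective (h.trans hv.symm)) (by simpa using hi')
    · exact h
  have hcommon : ∀ k ≠ j, f (.inr k) ∈ G.neighborSet v ∩ G.neighborSet x := by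
    intro k hk
    have hku : f (.inr k) ≠ u := hu' ▸ f.injective.ne (by simpa using hk)
    refine ⟨?_, ?_⟩
    · rw [← hv]
      exact adj_of_sup_edge_of_ne_of_ne (hf _ _ (by simp)) (hu' ▸ f.injective.ne (by simp)) hku
    · rw [← hx]
      exact adj_of_sup_edge_of_ne_of_ne (hf _ _ (by simp)) (hu' ▸ f.injective.ne (by simp)) hku
  calc 2 = (f ∘ Sum.inr '' {j}ᶜ).ncard := by
        rw [Set.ncard_image_of_injective _ (f.injective.comp Sum.inr_injective), Set.ncard_compl]
        simp
    _ ≤ _ := Set.ncard_le_ncard (by rintro _ ⟨k, hk, rfl⟩; exact hcommon k hk)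

end K23

theorem degree_one_vertex_common_neighbors {V : Type*} [Fintype V]
    (G : SimpleGraph V) (hG : K23Saturated G) (α x y : V)
    (hx : G.neighborSet α = {x}) (hy : y ∉ ({α, x} : Set V)) :
    2 ≤ (G.neighborSet y ∩ G.neighborSet x).ncard := by
  obtain ⟨hyα, hyx⟩ : y ≠ α ∧ y ≠ x := by simpa [not_or] using hy
  have hαy : ¬ G.Adj α y := fun h => hyx (by simpa [hx] using G.mem_neighborSet α y |>.2 h)
  obtain ⟨f, hf⟩ := hG.2 α y hyα.symm hαy
  exact two_le_ncard_neighborSet_inter_of_sup_edge hG.1 hx.subset hf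
end

section
/- Let G be a K_{2,3}-saturated graph with a vertex α of degree 1 whose unique neighbor is x. Set U₁ = N(x) \ {α} and U₂ = V \ N[x]. Then the number of edges of G satisfies e(G) ≥ d(x) + |U₁| + 2|U₂| + e(G[U₂]), where e(G[U₂]) denotes the number of edges within U₂. -/
open SimpleGraph

/-!
For `u ∉ {x, α}`, adding the edge `αu` creates a `K_{2,3}`, necessarily through `α`. In `G + αu` the
vertex `α` has only the two neighbours `x` and `u`, so it lies on the side of size three, the other
side is `{x, u}`, and the two remaining vertices are common neighbours of `x` and `u` other than `α`.
Hence every vertex of `U₁ ∪ U₂` has at least two neighbours in `U₁`. Double counting incidences then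
yields at least `|U₁|` edges inside `U₁` and at least `2|U₂|` edges between `U₁` and `U₂`; these are
distinct from each other, from the `d(x)` edges at `x` and from the edges inside `U₂`.
-/

theorem Set.ncard_mul_le_ncard_mul {α β : Type*} [Finite α] [Finite β] (r : α → β → Prop)
    {s : Set α} {t : Set β} {m n : ℕ}
    (hm : ∀ a ∈ s, m ≤ {b ∈ t | r a b}.ncard) (hn : ∀ b ∈ t, {a ∈ s | r a b}.ncard ≤ n) :
    s.ncard * m ≤ t.ncard * n := by
  classical
  have := Fintype.ofFinite α
  have := Fintype.ofFinite β
  simp only [Set.ncard_eq_toFinset_card'] at hm hn ⊢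
  refine Finset.card_mul_le_card_mul r (fun a ha => ?_) (fun b hb => ?_)
  · convert hm a (Set.mem_toFinset.1 ha) using 2
    ext; simp [Finset.mem_bipartiteAbove]
  · convert hn b (Set.mem_toFinset.1 hb) using 2
    ext; simp [Finset.mem_bipartiteBelow]

theorem Sym2.ncard_setOf_mem_le_two {α : Type*} (e : Sym2 α) : {a | a ∈ e}.ncard ≤ 2 := by
  induction e using Sym2.ind with
  | _ a b =>
    have : {c | c ∈ s(a, b)} = {a, b} := by ext; simp
    rw [this]
    exact (Set.ncard_insert_le a {b}).trans (by simp)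

namespace SimpleGraph

variable {V : Type*} (G : SimpleGraph V)

def edgesBetween (s t : Set V) : Set (Sym2 V) :=
  {e | ∃ a ∈ s, ∃ b ∈ t, G.Adj a b ∧ s(a, b) = e}

variable {G}

theorem edgesBetween_subset_edgeSet (s t : Set V) : G.edgesBetween s t ⊆ G.edgeSet := by
  rintro _ ⟨a, -, b, -, hab, rfl⟩
  exact hab

theorem disjoint_edgesBetween {s t s' t' : Set V}
    (h₁ : Disjoint s s' ∨ Disjoint t t') (h₂ : Disjoint s t' ∨ Disjoint t s') :
    Disjoint (G.edgesBetween s t) (G.edgesBetween s' t') := by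
  rw [Set.disjoint_left]
  rintro _ ⟨a, ha, b, hb, -, rfl⟩ ⟨a', ha', b', hb', -, he⟩
  rcases Sym2.eq_iff.1 he with ⟨rfl, rfl⟩ | ⟨rfl, rfl⟩
  · rcases h₁ with h | h
    · exact Set.disjoint_left.1 h ha ha'
    · exact Set.disjoint_left.1 h hb hb'
  · rcases h₂ with h | h
    · exact Set.disjoint_left.1 h ha hb'
    · exact Set.disjoint_left.1 h hb ha'

theorem edgesBetween_self_eq_image (s : Set V) :
    G.edgesBetween s s = Sym2.map (↑) '' (G.induce s).edgeSet := by
  ext e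
  constructor
  · rintro ⟨a, ha, b, hb, hab, rfl⟩
    exact ⟨s(⟨a, ha⟩, ⟨b, hb⟩), hab, rfl⟩
  · rintro ⟨e, he, rfl⟩
    induction e using Sym2.ind with
    | _ a b => exact ⟨a, a.2, b, b.2, he, rfl⟩

theorem ncard_edgesBetween_self (s : Set V) :
    (G.edgesBetween s s).ncard = (G.induce s).edgeSet.ncard := by
  rw [edgesBetween_self_eq_image,
    Set.ncard_image_of_injective _ (Sym2.map.injective Subtype.val_injective)]

variable [Finite V]

theorem ncard_neighborSet_inter_le {s t : Set V} {u : V} (hu : u ∈ t) :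
    (G.neighborSet u ∩ s).ncard ≤ {e ∈ G.edgesBetween s t | u ∈ e}.ncard := by
  rw [← Set.ncard_image_of_injective _ fun a b (h : s(a, u) = s(b, u)) => Sym2.congr_left.1 h]
  refine Set.ncard_le_ncard ?_
  rintro _ ⟨a, ⟨hua, ha⟩, rfl⟩
  exact ⟨⟨a, ha, u, hu, hua.symm, rfl⟩, Sym2.mem_mk_right a u⟩

theorem ncard_neighborSet_le_ncard_edgesBetween (x : V) :
    (G.neighborSet x).ncard ≤ (G.edgesBetween Set.univ {x}).ncard := by
  simpa using (G.ncard_neighborSet_inter_le (s := Set.univ) (Set.mem_singleton x)).trans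
    (Set.ncard_le_ncard (Set.sep_subset _ _))

theorem ncard_mul_le_ncard_edgesBetween_self {s : Set V} {k : ℕ}
    (h : ∀ u ∈ s, k ≤ (G.neighborSet u ∩ s).ncard) :
    s.ncard * k ≤ (G.edgesBetween s s).ncard * 2 :=
  Set.ncard_mul_le_ncard_mul (· ∈ ·) (fun u hu => (h u hu).trans (ncard_neighborSet_inter_le hu))
    fun e _ => (Set.ncard_le_ncard fun _ hu => hu.2).trans e.ncard_setOf_mem_le_two

theorem ncard_mul_le_ncard_edgesBetween {s t : Set V} {k : ℕ} (hst : Disjoint s t)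
    (h : ∀ u ∈ t, k ≤ (G.neighborSet u ∩ s).ncard) :
    t.ncard * k ≤ (G.edgesBetween s t).ncard := by
  refine (mul_one (G.edgesBetween s t).ncard).le.trans' <| Set.ncard_mul_le_ncard_mul (· ∈ ·)
    (fun u hu => (h u hu).trans (ncard_neighborSet_inter_le hu)) ?_
  rintro _ ⟨a, ha, b, -, -, rfl⟩
  refine (Set.ncard_le_ncard ?_).trans (Set.ncard_singleton b).le
  rintro u ⟨hu, hue⟩
  rcases Sym2.mem_iff.1 hue with rfl | rfl
  · exact absurd hu (Set.disjoint_left.1 hst ha)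
  · rfl

theorem ncard_edgesBetween_add_le {s t : Set V} {x : V} (hs : x ∉ s) (ht : x ∉ t)
    (hst : Disjoint s t) :
    (G.edgesBetween Set.univ {x}).ncard + (G.edgesBetween s s).ncard
      + (G.edgesBetween s t).ncard + (G.edgesBetween t t).ncard ≤ G.edgeSet.ncard := by
  have hxs := Set.disjoint_singleton_left.2 hs
  have hxt := Set.disjoint_singleton_left.2 ht
  rw [← Set.ncard_union_eq (disjoint_edgesBetween (.inr hxs) (.inr hxs)),
    ← Set.ncard_union_eq (Set.disjoint_union_left.2
      ⟨disjoint_edgesBetween (.inr hxt) (.inr hxs), disjoint_edgesBetween (.inr hst) (.inl hst)⟩),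
    ← Set.ncard_union_eq (Set.disjoint_union_left.2 ⟨Set.disjoint_union_left.2
      ⟨disjoint_edgesBetween (.inr hxt) (.inr hxt), disjoint_edgesBetween (.inl hst) (.inl hst)⟩,
      disjoint_edgesBetween (.inl hst) (.inl hst)⟩)]
  exact Set.ncard_le_ncard <| Set.union_subset (Set.union_subset (Set.union_subset
    (edgesBetween_subset_edgeSet _ _) (edgesBetween_subset_edgeSet _ _))
    (edgesBetween_subset_edgeSet _ _)) (edgesBetween_subset_edgeSet _ _)

end SimpleGraph

theorem nontrivial_commonNeighbors_of_hasK23_sup_edge {V : Type*} {G : SimpleGraph V}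
    {u v x : V} (hfree : ¬ HasK23 G) (hu : G.neighborSet u = {x})
    (hK : HasK23 (G ⊔ fromEdgeSet {s(u, v)})) :
    (G.commonNeighbors x v \ {u}).Nontrivial := by
  obtain ⟨f, hf⟩ := hK
  set H := G ⊔ fromEdgeSet {s(u, v)}
  have adj_of_ne {a b : V} (hab : H.Adj a b) (ha : a ≠ u) (hb : b ≠ u) : G.Adj a b := by
    refine hab.resolve_right fun ⟨he, _⟩ => ?_
    rcases Sym2.eq_iff.1 he with ⟨rfl, -⟩ | ⟨-, rfl⟩ <;> contradiction
  have nbr_u : H.neighborSet u ⊆ {x, v} := by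
    rintro b (hb | ⟨he, -⟩)
    · exact .inl (hu ▸ hb : b ∈ ({x} : Set V))
    · exact .inr (Sym2.congr_right.1 he)
  have ncard_pair : ({x, v} : Set V).ncard ≤ 2 :=
    (Set.ncard_insert_le x {v}).trans (by simp)
  have hf_inl : (f ∘ Sum.inl).Injective := f.injective.comp Sum.inl_injective
  have hf_inr : (f ∘ Sum.inr).Injective := f.injective.comp Sum.inr_injective
  obtain ⟨i, rfl⟩ : u ∈ Set.range f := by
    by_contra hu'
    exact hfree ⟨f, fun a b hab => adj_of_ne (hf a b hab) (fun h => hu' ⟨a, h⟩)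
      (fun h => hu' ⟨b, h⟩)⟩
  rcases i with j | j
  · have : Set.range (f ∘ Sum.inr) ⊆ {x, v} := by
      rintro _ ⟨k, rfl⟩
      exact nbr_u (hf (.inl j) (.inr k) (by simp))
    have := (Set.ncard_le_ncard this).trans ncard_pair
    simp [Set.ncard_range_of_injective hf_inr] at this
  · have range_inl : Set.range (f ∘ Sum.inl) = {x, v} := by
      refine Set.eq_of_subset_of_ncard_le ?_ ?_
      · rintro _ ⟨k, rfl⟩
        exact nbr_u (hf (.inr j) (.inl k) (by simp))
      · simpa [Set.ncard_range_of_injective hf_inl] using ncard_pair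
    have hcard : (Set.range (f ∘ Sum.inr) \ {f (.inr j)}).ncard = 2 := by
      have hmem : f (.inr j) ∈ Set.range (f ∘ Sum.inr) := ⟨j, rfl⟩
      rw [Set.ncard_sdiff_singleton_of_mem hmem, Set.ncard_range_of_injective hf_inr]
      simp
    refine (Set.one_lt_ncard_iff_nontrivial.1 (hcard ▸ one_lt_two)).mono ?_
    rintro _ ⟨⟨k, rfl⟩, hk⟩
    have adj (y : V) (hy : y ∈ ({x, v} : Set V)) : G.Adj y (f (.inr k)) := by
      obtain ⟨l, rfl⟩ := range_inl ▸ hy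
      exact adj_of_ne (hf (.inl l) (.inr k) (by simp)) (by simp) hk
    exact ⟨⟨adj x (by simp), adj v (by simp)⟩, hk⟩

theorem K23Saturated.two_le_ncard_neighborSet_inter {V : Type*} [Finite V] {G : SimpleGraph V}
    (hG : K23Saturated G) {α x w : V} (hα : G.neighborSet α = {x}) (hwx : w ≠ x)
    (hwα : w ≠ α) : 2 ≤ (G.neighborSet w ∩ (G.neighborSet x \ {α})).ncard := by
  have hK := hG.2 α w hwα.symm fun h => hwx (hα ▸ h : w ∈ ({x} : Set V))
  refine Set.one_lt_ncard_iff_nontrivial.2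
    ((nontrivial_commonNeighbors_of_hasK23_sup_edge hG.1 hα hK).mono ?_)
  rintro a ⟨⟨hxa, hwa⟩, haα⟩
  exact ⟨hwa, hxa, haα⟩

theorem edge_count_decomposition_degree_one {V : Type*} [Fintype V]
    (G : SimpleGraph V) (hG : K23Saturated G) (α x : V)
    (hx : G.neighborSet α = {x})
    (U₁ U₂ : Set V) (hU₁ : U₁ = G.neighborSet x \ {α})
    (hU₂ : U₂ = Set.univ \ insert x (G.neighborSet x)) :
    (G.neighborSet x).ncard + U₁.ncard + 2 * U₂.ncard
      + (G.induce U₂).edgeSet.ncard ≤ G.edgeSet.ncard := by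
  have hxα : G.Adj x α := (hx ▸ rfl : x ∈ G.neighborSet α).symm
  have hU₁_ne {v : V} (hv : v ∈ U₁) : v ≠ x ∧ v ≠ α := by
    rw [hU₁] at hv
    exact ⟨(G.ne_of_adj hv.1).symm, hv.2⟩
  have hU₂_ne {v : V} (hv : v ∈ U₂) : v ≠ x ∧ v ≠ α := by
    rw [hU₂] at hv
    exact ⟨fun h => hv.2 (.inl h), fun h => hv.2 (.inr (h ▸ hxα))⟩
  have two_le {v : V} (hv : v ≠ x ∧ v ≠ α) : 2 ≤ (G.neighborSet v ∩ U₁).ncard :=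
    hU₁ ▸ hG.two_le_ncard_neighborSet_inter hx hv.1 hv.2
  have hU₁U₂ : Disjoint U₁ U₂ :=
    Set.disjoint_left.2 fun v hv₁ hv₂ => by
      rw [hU₁] at hv₁
      rw [hU₂] at hv₂
      exact hv₂.2 (.inr hv₁.1)
  have h₁ := G.ncard_mul_le_ncard_edgesBetween_self fun v hv => two_le (hU₁_ne hv)
  have h₂ := G.ncard_mul_le_ncard_edgesBetween hU₁U₂ fun v hv => two_le (hU₂_ne hv)
  have h₃ := G.ncard_edgesBetween_self U₂
  have hx_edges := G.ncard_neighborSet_le_ncard_edgesBetween x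
  have h_sum := G.ncard_edgesBetween_add_le (fun h => (hU₁_ne h).1 rfl)
    (fun h => (hU₂_ne h).1 rfl) hU₁U₂
  omega
end

section
/- Let G be a K_{2,3}-saturated graph on n vertices with minimum degree 3 such that for every vertex α of degree 3 the neighborhood N(α) induces a triangle. Then G has at least 2n − 2 edges. -/
open SimpleGraph

/-! The closed neighbourhood of a vertex of degree 3 is a `K₄`. Two such `K₄`'s meet in at most
one vertex, since two common vertices, two further vertices of the first and one of the second
form a `K_{2,3}`. They also meet in at least one vertex: if the closed neighbourhoods of `u` and
`v` were disjoint, the `K_{2,3}` created by the edge `uv` would have `u` (say) and a vertex `b`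
outside `N[u]` on one side and two neighbours `y, z` of `u` on the other; then `{y, z}` and
`{u, b, p}`, with `p` the third neighbour of `u`, are the sides of a `K_{2,3}` in `G`.

If `t` such `K₄`'s pairwise meet in exactly one vertex and `x` lies in `kₓ` of them, then
`deg x ≥ 3 kₓ`, and `deg x ≥ 4` when `kₓ = 0`; so `deg x + kₓ ≥ 4 + 4 (kₓ - 1)` in truncated
subtraction. Summing gives `2e + 4t ≥ 4n + 4 ∑ₓ (kₓ - 1)`, and counting pairs of cliques through
their common vertices gives `t ≤ ∑ₓ (kₓ - 1) + 1`. -/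

open Finset

theorem Set.Intersecting.card_le_sum_card_filter_mem_sub_one_add_one {α : Type*} [Fintype α]
    [DecidableEq α] {F : Finset (Finset α)} (hF : (F : Set (Finset α)).Intersecting) :
    #F ≤ ∑ x, (#{s ∈ F | x ∈ s} - 1) + 1 := by
  set k : α → ℕ := fun x => #{s ∈ F | x ∈ s}
  show #F ≤ ∑ x, (k x - 1) + 1
  have hcover : F.offDiag ⊆ Finset.univ.biUnion fun x => {s ∈ F | x ∈ s}.offDiag := by
    intro p hp
    obtain ⟨hs, ht, -⟩ := Finset.mem_offDiag.1 hp
    obtain ⟨x, hxs, hxt⟩ := Finset.not_disjoint_iff.1 (hF hs ht)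
    exact Finset.mem_biUnion.2 ⟨x, Finset.mem_univ x, Finset.mem_offDiag.2
      ⟨Finset.mem_filter.2 ⟨hs, hxs⟩, Finset.mem_filter.2 ⟨ht, hxt⟩, (Finset.mem_offDiag.1 hp).2.2⟩⟩
  have hpairs : #F * (#F - 1) ≤ #F * ∑ x, (k x - 1) := calc
    #F * (#F - 1) = #F.offDiag := by rw [offDiag_card, Nat.mul_sub_one]
    _ ≤ ∑ x, #{s ∈ F | x ∈ s}.offDiag := (Finset.card_le_card hcover).trans card_biUnion_le
    _ = ∑ x, k x * (k x - 1) := by simp only [offDiag_card, Nat.mul_sub_one, k]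
    _ ≤ ∑ x, #F * (k x - 1) := sum_le_sum fun x _ =>
      Nat.mul_le_mul_right _ (Finset.card_le_card (Finset.filter_subset _ _))
    _ = #F * ∑ x, (k x - 1) := (mul_sum _ _ _).symm
  rcases Nat.eq_zero_or_pos #F with hempty | hpos
  · omega
  · have := Nat.le_of_mul_le_mul_left hpairs hpos
    omega

theorem Finset.sum_card_filter_mem {α : Type*} [Fintype α] [DecidableEq α]
    (F : Finset (Finset α)) : ∑ x, #{s ∈ F | x ∈ s} = ∑ s ∈ F, #s := by
  simp only [card_filter]
  rw [sum_comm]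
  simp

namespace SimpleGraph

variable {V : Type*} {G : SimpleGraph V}

theorem hasK23_of_adj {c d p q r : V} (hcd : c ≠ d) (hpq : p ≠ q) (hpr : p ≠ r) (hqr : q ≠ r)
    (hcp : G.Adj c p) (hcq : G.Adj c q) (hcr : G.Adj c r)
    (hdp : G.Adj d p) (hdq : G.Adj d q) (hdr : G.Adj d r) : HasK23 G := by
  have hne : c ≠ p ∧ c ≠ q ∧ c ≠ r ∧ d ≠ p ∧ d ≠ q ∧ d ≠ r :=
    ⟨hcp.ne, hcq.ne, hcr.ne, hdp.ne, hdq.ne, hdr.ne⟩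
  refine ⟨⟨Sum.elim ![c, d] ![p, q, r], ?_⟩, fun a b h => ?_⟩
  · rintro (i | i) (j | j) h <;> fin_cases i <;> fin_cases j <;> simp_all [eq_comm]
  · change G.Adj (Sum.elim ![c, d] ![p, q, r] a) (Sum.elim ![c, d] ![p, q, r] b)
    rcases a with i | i <;> rcases b with j | j <;> fin_cases i <;> fin_cases j <;>
      simp_all [adj_comm]

/-- The sides of the `K_{2,3}` are `{a, b}` and `{c, y, z}`; its only edge missing from `G` is
`ac`. -/
theorem exists_adj_of_hasK23_sup_edge {u v : V} (hG : ¬HasK23 G)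
    (h : HasK23 (G ⊔ fromEdgeSet {s(u, v)})) :
    ∃ a c b y z, s(a, c) = s(u, v) ∧ b ≠ a ∧ y ≠ z ∧
      G.Adj c b ∧ G.Adj b y ∧ G.Adj b z ∧ G.Adj a y ∧ G.Adj a z := by
  obtain ⟨f, hf⟩ := h
  have hcross (i : Fin 2) (j : Fin 3) :
      (G ⊔ fromEdgeSet {s(u, v)}).Adj (f (.inl i)) (f (.inr j)) := hf _ _ (by simp)
  obtain ⟨i, j, hij⟩ : ∃ i j, ¬G.Adj (f (.inl i)) (f (.inr j)) := by
    by_contra! hall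
    refine hG ⟨f, ?_⟩
    rintro (i | i) (j | j) hab
    · simp at hab
    · exact hall i j
    · exact (hall j i).symm
    · simp at hab
  have hnew : s(f (.inl i), f (.inr j)) = s(u, v) := by
    simpa [hij] using hcross i j
  have hold (i' : Fin 2) (j' : Fin 3) (hne : i' ≠ i ∨ j' ≠ j) :
      G.Adj (f (.inl i')) (f (.inr j')) := by
    refine (hcross i' j').resolve_right fun hadd => ?_
    rw [fromEdgeSet_adj, Set.mem_singleton_iff, ← hnew, Sym2.eq_iff] at hadd
    simp [f.injective.eq_iff] at hadd
    omega
  obtain ⟨i', hi'⟩ : ∃ i', i' ≠ i := (by decide : ∀ i : Fin 2, ∃ i', i' ≠ i) i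
  obtain ⟨j₁, j₂, hj₁, hj₂, hj₁₂⟩ : ∃ j₁ j₂, j₁ ≠ j ∧ j₂ ≠ j ∧ j₁ ≠ j₂ :=
    (by decide : ∀ j : Fin 3, ∃ j₁ j₂, j₁ ≠ j ∧ j₂ ≠ j ∧ j₁ ≠ j₂) j
  refine ⟨f (.inl i), f (.inr j), f (.inl i'), f (.inr j₁), f (.inr j₂), hnew,
    by simpa [f.injective.eq_iff], by simpa [f.injective.eq_iff], (hold i' j (.inl hi')).symm,
    hold i' j₁ (.inl hi'), hold i' j₂ (.inl hi'), hold i j₁ (.inr hj₁), hold i j₂ (.inr hj₂)⟩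

theorem card_inter_le_one_of_isNClique [DecidableEq V] (hG : ¬HasK23 G) {s t : Finset V}
    (hs : G.IsNClique 4 s) (ht : G.IsNClique 4 t) (hst : s ≠ t) : #(s ∩ t) ≤ 1 := by
  by_contra! h
  obtain ⟨x, hx, y, hy, hxy⟩ := one_lt_card.1 h
  rw [mem_inter] at hx hy
  obtain ⟨e, het, hes⟩ : ∃ e ∈ t, e ∉ s := not_subset.1 fun hts =>
    hst (eq_of_subset_of_card_le hts (by rw [hs.card_eq, ht.card_eq])).symm
  have hrest : #((s.erase x).erase y) = 2 := by
    rw [card_erase_of_mem (mem_erase.2 ⟨hxy.symm, hy.1⟩), card_erase_of_mem hx.1, hs.card_eq]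
  obtain ⟨p, q, hpq, hpq_eq⟩ := card_eq_two.1 hrest
  have hp : p ∈ (s.erase x).erase y := by simp [hpq_eq]
  have hq : q ∈ (s.erase x).erase y := by simp [hpq_eq]
  simp only [mem_erase] at hp hq
  exact hG (hasK23_of_adj hxy hpq (ne_of_mem_of_not_mem hp.2.2 hes)
    (ne_of_mem_of_not_mem hq.2.2 hes)
    (hs.isClique hx.1 hp.2.2 (Ne.symm hp.2.1)) (hs.isClique hx.1 hq.2.2 (Ne.symm hq.2.1))
    (ht.isClique hx.2 het (ne_of_mem_of_not_mem hx.1 hes))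
    (hs.isClique hy.1 hp.2.2 (Ne.symm hp.1)) (hs.isClique hy.1 hq.2.2 (Ne.symm hq.1))
    (ht.isClique hy.2 het (ne_of_mem_of_not_mem hy.1 hes)))

theorem hasK23_of_degree_eq_three [DecidableEq V] {a b y z : V} [Fintype (G.neighborSet a)]
    (ha : G.degree a = 3) (hN : G.IsClique (G.neighborSet a)) (hba : b ≠ a) (hab : ¬G.Adj a b)
    (hyz : y ≠ z) (hby : G.Adj b y) (hbz : G.Adj b z) (hay : G.Adj a y) (haz : G.Adj a z) :
    HasK23 G := by
  have hrest : #(((G.neighborFinset a).erase y).erase z) = 1 := by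
    rw [card_erase_of_mem (by simp [hyz.symm, haz]), card_erase_of_mem (by simpa),
      card_neighborFinset_eq_degree, ha]
  obtain ⟨p, hp_eq⟩ := card_eq_one.1 hrest
  have hp : p ∈ ((G.neighborFinset a).erase y).erase z := by simp [hp_eq]
  simp only [mem_erase, mem_neighborFinset] at hp
  obtain ⟨hpz, hpy, hap⟩ := hp
  have hpb : p ≠ b := by rintro rfl; exact hab hap
  exact hasK23_of_adj hyz hap.ne hba.symm hpb hay.symm (hN hay hap hpy.symm) hby.symm
    haz.symm (hN haz hap hpz.symm) hbz.symm

theorem _root_.K23Saturated.insert_neighborFinset_inter_nonempty [DecidableEq V]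
    [∀ v, Fintype (G.neighborSet v)] (hG : K23Saturated G) {u v : V} (hu : G.degree u = 3)
    (hv : G.degree v = 3) (huN : G.IsClique (G.neighborSet u))
    (hvN : G.IsClique (G.neighborSet v)) :
    (insert u (G.neighborFinset u) ∩ insert v (G.neighborFinset v)).Nonempty := by
  rw [← not_disjoint_iff_nonempty_inter]
  intro hdisj
  have huv : u ≠ v := by
    rintro rfl
    exact Finset.disjoint_left.1 hdisj (mem_insert_self u _) (mem_insert_self u _)
  have hnadj : ¬G.Adj u v := fun h =>
    Finset.disjoint_left.1 hdisj (by simp [h]) (mem_insert_self v _)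
  obtain ⟨a, c, b, y, z, hac, hba, hyz, hcb, hby, hbz, hay, haz⟩ :=
    exists_adj_of_hasK23_sup_edge hG.1 (hG.2 u v huv hnadj)
  have hb_out {a' c' : V} (h : Disjoint (insert a' (G.neighborFinset a'))
      (insert c' (G.neighborFinset c'))) (hc'b : G.Adj c' b) : ¬G.Adj a' b :=
    fun hab => Finset.disjoint_left.1 h (show b ∈ insert a' _ by simp [hab]) (by simp [hc'b])
  rcases Sym2.eq_iff.1 hac with ⟨rfl, rfl⟩ | ⟨rfl, rfl⟩
  · exact hG.1 (hasK23_of_degree_eq_three hu huN hba (hb_out hdisj hcb) hyz hby hbz hay haz)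
  · exact hG.1 (hasK23_of_degree_eq_three hv hvN hba (hb_out hdisj.symm hcb) hyz hby hbz hay haz)

theorem mul_card_filter_mem_le_degree [DecidableEq V] (x : V) [Fintype (G.neighborSet x)]
    {m : ℕ} {F : Finset (Finset V)} (hF : ∀ s ∈ F, G.IsNClique m s)
    (hmeet : ∀ s ∈ F, ∀ t ∈ F, s ≠ t → #(s ∩ t) ≤ 1) :
    (m - 1) * #{s ∈ F | x ∈ s} ≤ G.degree x := by
  set Fx := {s ∈ F | x ∈ s}
  have hdisj : (Fx : Set (Finset V)).PairwiseDisjoint (·.erase x) := by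
    intro s hs t ht hst
    rw [mem_coe, mem_filter] at hs ht
    refine Finset.disjoint_left.2 fun w hws hwt => ?_
    rw [mem_erase] at hws hwt
    have := hmeet s hs.1 t ht.1 hst
    have : 1 < #(s ∩ t) := one_lt_card.2
      ⟨x, mem_inter.2 ⟨hs.2, ht.2⟩, w, mem_inter.2 ⟨hws.2, hwt.2⟩, hws.1.symm⟩
    omega
  have hsub : Fx.biUnion (·.erase x) ⊆ G.neighborFinset x := by
    intro w hw
    obtain ⟨s, hs, hws⟩ := mem_biUnion.1 hw
    rw [mem_filter] at hs
    rw [mem_erase] at hws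
    exact (mem_neighborFinset _ _ _).2 ((hF s hs.1).isClique hs.2 hws.2 hws.1.symm)
  calc (m - 1) * #Fx = ∑ _s ∈ Fx, (m - 1) := by rw [sum_const, smul_eq_mul, mul_comm]
    _ = ∑ s ∈ Fx, #(s.erase x) := sum_congr rfl fun s hs => by
      rw [mem_filter] at hs
      rw [card_erase_of_mem hs.2, (hF s hs.1).card_eq]
    _ = #(Fx.biUnion (·.erase x)) := (card_biUnion hdisj).symm
    _ ≤ #(G.neighborFinset x) := card_le_card hsub
    _ = G.degree x := card_neighborFinset_eq_degree _ _

theorem isNClique_insert_neighborFinset [DecidableEq V] {v : V} [Fintype (G.neighborSet v)]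
    {d : ℕ} (hv : G.degree v = d) (hN : G.IsClique (G.neighborSet v)) :
    G.IsNClique (d + 1) (insert v (G.neighborFinset v)) := by
  refine ⟨?_, ?_⟩
  · rw [coe_insert, coe_neighborFinset, isClique_insert]
    exact ⟨hN, fun w hw _ => hw⟩
  · rw [card_insert_of_notMem (by simp), card_neighborFinset_eq_degree, hv]

theorem two_mul_card_sub_two_le_card_edgeFinset [Fintype V] [DecidableEq V]
    [DecidableRel G.Adj] {F : Finset (Finset V)} (hF : ∀ s ∈ F, G.IsNClique 4 s)
    (hmeet : ∀ s ∈ F, ∀ t ∈ F, s ≠ t → #(s ∩ t) ≤ 1) (hint : (F : Set (Finset V)).Intersecting)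
    (hdeg : ∀ v, (∀ s ∈ F, v ∉ s) → 4 ≤ G.degree v) :
    2 * Fintype.card V - 2 ≤ #G.edgeFinset := by
  have hvertex (x : V) : 4 * (#{s ∈ F | x ∈ s} - 1) + 4 ≤ G.degree x + #{s ∈ F | x ∈ s} := by
    have := mul_card_filter_mem_le_degree x hF hmeet
    by_cases hx : ∀ s ∈ F, x ∉ s
    · have := hdeg x hx
      omega
    · obtain ⟨s, hs, hxs⟩ : ∃ s ∈ F, x ∈ s := by simpa using hx
      have : 0 < #{s ∈ F | x ∈ s} := card_pos.2 ⟨s, mem_filter.2 ⟨hs, hxs⟩⟩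
      omega
  have hsum := sum_le_sum fun x (_ : x ∈ univ) => hvertex x
  rw [sum_add_distrib, sum_add_distrib, sum_degrees_eq_twice_card_edges, sum_card_filter_mem,
    sum_congr rfl fun s hs => (hF s hs).card_eq, ← mul_sum] at hsum
  have := hint.card_le_sum_card_filter_mem_sub_one_add_one
  simp only [sum_const, card_univ, smul_eq_mul] at hsum
  omega

end SimpleGraph

theorem sat_K23_min_degree_three_triangle_general (n : ℕ) (G : SimpleGraph (Fin n))
    (hG : K23Saturated G)
    (hmin : ∀ v, 3 ≤ (G.neighborSet v).ncard)
    (htri : ∀ v, (G.neighborSet v).ncard = 3 →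
      ∀ a ∈ G.neighborSet v, ∀ b ∈ G.neighborSet v, a ≠ b → G.Adj a b) :
    2 * n - 2 ≤ G.edgeSet.ncard := by
  classical
  have hncard (v : Fin n) : (G.neighborSet v).ncard = G.degree v := by
    rw [← card_neighborSet_eq_degree, ← Nat.card_coe_set_eq, Nat.card_eq_fintype_card]
  have hN (v : Fin n) (hv : G.degree v = 3) : G.IsClique (G.neighborSet v) :=
    htri v (by rw [hncard, hv])
  set F := ({v | G.degree v = 3} : Finset (Fin n)).image fun v => insert v (G.neighborFinset v)
  have hF : ∀ s ∈ F, G.IsNClique 4 s := by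
    simp only [F, mem_image, mem_filter, mem_univ, true_and]
    rintro _ ⟨v, hv, rfl⟩
    exact isNClique_insert_neighborFinset hv (hN v hv)
  have hint : (F : Set (Finset (Fin n))).Intersecting := by
    simp only [Set.Intersecting, F, coe_image, Set.mem_image, mem_coe, mem_filter, mem_univ,
      true_and]
    rintro _ ⟨u, hu, rfl⟩ _ ⟨v, hv, rfl⟩
    exact not_disjoint_iff_nonempty_inter.2
      (hG.insert_neighborFinset_inter_nonempty hu hv (hN u hu) (hN v hv))
  have hdeg (v : Fin n) (hv : ∀ s ∈ F, v ∉ s) : 4 ≤ G.degree v := by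
    have hv3 : G.degree v ≠ 3 := fun h3 =>
      hv _ (mem_image_of_mem _ (by simpa using h3)) (mem_insert_self _ _)
    have := hmin v
    rw [hncard] at this
    omega
  have := two_mul_card_sub_two_le_card_edgeFinset hF
    (fun s hs t ht => card_inter_le_one_of_isNClique hG.1 (hF s hs) (hF t ht)) hint hdeg
  rw [Fintype.card_fin] at this
  rwa [← coe_edgeFinset, Set.ncard_coe_finset]

theorem sat_K23_min_degree_three_triangle (n : ℕ) (G : SimpleGraph (Fin n))
    (hG : K23Saturated G)
    (hmin : ∀ v, 3 ≤ (G.neighborSet v).ncard)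
    (hex : ∃ v, (G.neighborSet v).ncard = 3)
    (htri : ∀ v, (G.neighborSet v).ncard = 3 →
      ∀ a ∈ G.neighborSet v, ∀ b ∈ G.neighborSet v, a ≠ b → G.Adj a b) :
    2 * n - 2 ≤ G.edgeSet.ncard :=
  sat_K23_min_degree_three_triangle_general n G hG hmin htri
end

section
/- Let H be a 2-regular graph on m ≥ 3 vertices with no 4-cycle (i.e., C_4-free). Then the graph G = K_1 * (K_1 + H), i.e., the join of a single vertex with the disjoint union of an isolated vertex and H, is K_{2,3}-saturated and has 2(m + 2) − 3 edges. -/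
open SimpleGraph

/-- The join `K₁ * (K₁ + H)`: an apex vertex `Sum.inl ()` joined to an isolated
vertex `Sum.inr (Sum.inl ())` together with a copy of `H`. -/
def apexPlusIsolated {m : ℕ} (H : SimpleGraph (Fin m)) :
    SimpleGraph (Unit ⊕ Unit ⊕ Fin m) :=
  SimpleGraph.fromRel (fun x y =>
    x = Sum.inl () ∨
    ∃ a b : Fin m, x = Sum.inr (Sum.inr a) ∧ y = Sum.inr (Sum.inr b) ∧ H.Adj a b)

/-!
In `G - apex = K₁ + H` every vertex has degree at most two, and two distinct vertices have at
most one common neighbour because `H` is `C₄`-free. So in a `K_{2,3}` of `G` a non-apex vertex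
of the 2-side forces the apex into the 3-side, and then the two vertices of the 2-side have two
common neighbours in `G - apex`: impossible.
Up to symmetry every non-edge joins some `z` to a copy of `c ∈ H`; adding it makes `z` and the
two `H`-neighbours of `c` common neighbours of the apex and `c`. The edge count is half the
degree sum `(m + 1) + 1 + 3m`.
-/

theorem hasK23_iff {V : Type*} {G : SimpleGraph V} :
    HasK23 G ↔ ∃ x y p q r, x ≠ y ∧ p ≠ q ∧ p ≠ r ∧ q ≠ r ∧
      G.Adj x p ∧ G.Adj x q ∧ G.Adj x r ∧ G.Adj y p ∧ G.Adj y q ∧ G.Adj y r := by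
  constructor
  · rintro ⟨f, hf⟩
    have hne : ∀ a b, a ≠ b → f a ≠ f b := fun a b h => f.injective.ne h
    exact ⟨f (.inl 0), f (.inl 1), f (.inr 0), f (.inr 1), f (.inr 2),
      hne _ _ (by simp), hne _ _ (by simp), hne _ _ (by simp), hne _ _ (by simp),
      hf _ _ (by simp), hf _ _ (by simp), hf _ _ (by simp),
      hf _ _ (by simp), hf _ _ (by simp), hf _ _ (by simp)⟩
  · rintro ⟨x, y, p, q, r, hxy, hpq, hpr, hqr, hxp, hxq, hxr, hyp, hyq, hyr⟩
    refine ⟨⟨Sum.elim ![x, y] ![p, q, r], ?_⟩, ?_⟩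
    · rintro (a | a) (b | b) hab <;> fin_cases a <;> fin_cases b <;> simp_all
    · intro a b hab
      change G.Adj (Sum.elim ![x, y] ![p, q, r] a) (Sum.elim ![x, y] ![p, q, r] b)
      rcases a with a | a <;> rcases b with b | b <;> fin_cases a <;> fin_cases b <;>
        simp_all [adj_comm]

theorem two_mul_ncard_edgeSet {V : Type*} [Fintype V] (G : SimpleGraph V) :
    2 * G.edgeSet.ncard = ∑ v, (G.neighborSet v).ncard := by
  classical
  rw [← coe_edgeFinset, Set.ncard_coe_finset, ← sum_degrees_eq_twice_card_edges]
  refine Finset.sum_congr rfl fun v _ => ?_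
  rw [← card_neighborSet_eq_degree, ← Nat.card_eq_fintype_card, Nat.card_coe_set_eq]

namespace ApexPlusIsolated

variable {m : ℕ} {H : SimpleGraph (Fin m)}

abbrev apex : Unit ⊕ Unit ⊕ Fin m := .inl ()
abbrev isolated : Unit ⊕ Unit ⊕ Fin m := .inr (.inl ())
abbrev copy (a : Fin m) : Unit ⊕ Unit ⊕ Fin m := .inr (.inr a)

theorem copy_injective : Function.Injective (copy : Fin m → Unit ⊕ Unit ⊕ Fin m) :=
  fun _ _ h => by simpa using h

@[simp] theorem adj_apex_left {x : Unit ⊕ Unit ⊕ Fin m} :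
    (apexPlusIsolated H).Adj apex x ↔ x ≠ apex := by
  simp [apexPlusIsolated, eq_comm]

@[simp] theorem adj_isolated_left {x : Unit ⊕ Unit ⊕ Fin m} :
    (apexPlusIsolated H).Adj isolated x ↔ x = apex := by
  rcases x with _ | _ | _ <;> simp [apexPlusIsolated]

@[simp] theorem adj_copy {a b : Fin m} :
    (apexPlusIsolated H).Adj (copy a) (copy b) ↔ H.Adj a b := by
  simp [apexPlusIsolated, H.adj_comm b a, and_iff_right_of_imp Adj.ne]

theorem exists_copy_of_adj {u v : Unit ⊕ Unit ⊕ Fin m} (h : (apexPlusIsolated H).Adj u v)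
    (hu : u ≠ apex) (hv : v ≠ apex) : ∃ a b, u = copy a ∧ v = copy b ∧ H.Adj a b := by
  rcases u with (⟨⟨⟩⟩ | ⟨⟨⟩⟩ | a) <;> rcases v with (⟨⟨⟩⟩ | ⟨⟨⟩⟩ | b) <;> simp_all [adj_comm]

theorem apex_among_three_neighbors (hdeg : ∀ v, (H.neighborSet v).ncard ≤ 2)
    {v p q r : Unit ⊕ Unit ⊕ Fin m} (hv : v ≠ apex) (hpq : p ≠ q) (hpr : p ≠ r) (hqr : q ≠ r)
    (hvp : (apexPlusIsolated H).Adj v p) (hvq : (apexPlusIsolated H).Adj v q)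
    (hvr : (apexPlusIsolated H).Adj v r) : p = apex ∨ q = apex ∨ r = apex := by
  by_contra! h
  obtain ⟨c, a, rfl, rfl, hca⟩ := exists_copy_of_adj hvp hv h.1
  obtain ⟨_, b, hc, rfl, hcb⟩ := exists_copy_of_adj hvq hv h.2.1
  obtain ⟨_, d, hc', rfl, hcd⟩ := exists_copy_of_adj hvr hv h.2.2
  cases copy_injective hc
  cases copy_injective hc'
  have : 2 < (H.neighborSet c).ncard :=
    (Set.two_lt_ncard_iff).mpr ⟨a, b, d, hca, hcb, hcd, by simpa using hpq, by simpa using hpr,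
      by simpa using hqr⟩
  exact absurd (hdeg c) this.not_ge

theorem not_two_common_neighbors
    (hC4 : ∀ a b c d : Fin m, a ≠ c → b ≠ d →
      H.Adj a b → H.Adj b c → H.Adj c d → H.Adj d a → False)
    {x y p q : Unit ⊕ Unit ⊕ Fin m} (hxy : x ≠ y) (hpq : p ≠ q)
    (hx : x ≠ apex) (hy : y ≠ apex) (hp : p ≠ apex) (hq : q ≠ apex)
    (hxp : (apexPlusIsolated H).Adj x p) (hyp : (apexPlusIsolated H).Adj y p)
    (hxq : (apexPlusIsolated H).Adj x q) (hyq : (apexPlusIsolated H).Adj y q) : False := by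
  obtain ⟨a, b, rfl, rfl, hab⟩ := exists_copy_of_adj hxp hx hp
  obtain ⟨c, _, rfl, hb, hcb⟩ := exists_copy_of_adj hyp hy hp
  obtain ⟨_, d, ha, rfl, had⟩ := exists_copy_of_adj hxq hx hq
  obtain ⟨_, _, hc, hd, hcd⟩ := exists_copy_of_adj hyq hy hq
  cases copy_injective hb
  cases copy_injective ha
  cases copy_injective hc
  cases copy_injective hd
  exact hC4 a b c d (by simpa using hxy) (by simpa using hpq) hab hcb.symm hcd had.symm

theorem not_hasK23 (hdeg : ∀ v, (H.neighborSet v).ncard ≤ 2)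
    (hC4 : ∀ a b c d : Fin m, a ≠ c → b ≠ d →
      H.Adj a b → H.Adj b c → H.Adj c d → H.Adj d a → False) :
    ¬ HasK23 (apexPlusIsolated H) := by
  rw [hasK23_iff]
  rintro ⟨x, y, p, q, r, hxy, hpq, hpr, hqr, hxp, hxq, hxr, hyp, hyq, hyr⟩
  wlog hy : y ≠ apex generalizing x y
  · exact this y x hxy.symm hyp hyq hyr hxp hxq hxr (not_not.mp hy ▸ hxy)
  rcases apex_among_three_neighbors hdeg hy hpq hpr hqr hyp hyq hyr with rfl | rfl | rfl
  · exact not_two_common_neighbors hC4 hxy hqr hxp.ne hy hpq.symm hpr.symm hxq hyq hxr hyr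
  · exact not_two_common_neighbors hC4 hxy hpr hxq.ne hy hpq hqr.symm hxp hyp hxr hyr
  · exact not_two_common_neighbors hC4 hxy hpq hxr.ne hy hpr hqr hxp hyp hxq hyq

theorem hasK23_sup_edge_copy (hdeg : ∀ v, 2 ≤ (H.neighborSet v).ncard)
    {z : Unit ⊕ Unit ⊕ Fin m} {c : Fin m} (hz : z ≠ apex) (hzc : z ≠ copy c)
    (hnadj : ¬ (apexPlusIsolated H).Adj z (copy c)) :
    HasK23 (apexPlusIsolated H ⊔ fromEdgeSet {s(z, copy c)}) := by
  obtain ⟨a, b, hca, hcb, hab⟩ := (Set.one_lt_ncard_iff).mp (hdeg c)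
  have hle : apexPlusIsolated H ≤ apexPlusIsolated H ⊔ fromEdgeSet {s(z, copy c)} := le_sup_left
  have hza : z ≠ copy a := by rintro rfl; exact hnadj (adj_copy.mpr hca.symm)
  have hzb : z ≠ copy b := by rintro rfl; exact hnadj (adj_copy.mpr hcb.symm)
  rw [hasK23_iff]
  refine ⟨apex, copy c, z, copy a, copy b, by simp, hza, hzb, by simpa using hab,
    hle (adj_apex_left.mpr hz), hle (by simp), hle (by simp),
    Or.inr ⟨by simp, hzc.symm⟩, hle (adj_copy.mpr hca), hle (adj_copy.mpr hcb)⟩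

theorem hasK23_sup_edge_of_not_adj (hdeg : ∀ v, 2 ≤ (H.neighborSet v).ncard)
    {u v : Unit ⊕ Unit ⊕ Fin m} (huv : u ≠ v) (hnadj : ¬ (apexPlusIsolated H).Adj u v) :
    HasK23 (apexPlusIsolated H ⊔ fromEdgeSet {s(u, v)}) := by
  have hu : u ≠ apex := by rintro rfl; exact hnadj (adj_apex_left.mpr huv.symm)
  have hv : v ≠ apex := by rintro rfl; exact hnadj (adj_apex_left.mpr huv).symm
  rcases v with ⟨⟨⟩⟩ | ⟨⟨⟩⟩ | c
  · exact absurd rfl hv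
  · rcases u with ⟨⟨⟩⟩ | ⟨⟨⟩⟩ | c
    · exact absurd rfl hu
    · exact absurd rfl huv
    · rw [Sym2.eq_swap]
      exact hasK23_sup_edge_copy hdeg hv huv.symm fun h => hnadj h.symm
  · exact hasK23_sup_edge_copy hdeg hu huv hnadj

theorem neighborSet_apex : (apexPlusIsolated H).neighborSet apex = {apex}ᶜ := by
  ext; simp

theorem neighborSet_isolated : (apexPlusIsolated H).neighborSet isolated = {apex} := by
  ext; simp

theorem neighborSet_copy (a : Fin m) :
    (apexPlusIsolated H).neighborSet (copy a) = insert apex (copy '' H.neighborSet a) := by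
  ext x
  rcases x with ⟨⟨⟩⟩ | ⟨⟨⟩⟩ | b <;> simp [adj_comm]

theorem ncard_edgeSet (hreg : ∀ v, (H.neighborSet v).ncard = 2) :
    (apexPlusIsolated H).edgeSet.ncard = 2 * m + 1 := by
  have hcopy : ∀ a, ((apexPlusIsolated H).neighborSet (copy a)).ncard = 3 := fun a => by
    rw [neighborSet_copy, Set.ncard_insert_of_notMem (by simp),
      Set.ncard_image_of_injective _ copy_injective, hreg]
  have hapex : ((apexPlusIsolated H).neighborSet apex).ncard = m + 1 := by
    rw [neighborSet_apex, Set.ncard_compl, Set.ncard_singleton, Nat.card_eq_fintype_card]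
    simp only [Fintype.card_sum, Fintype.card_unit, Fintype.card_fin]
    omega
  have hsum := two_mul_ncard_edgeSet (apexPlusIsolated H)
  simp only [Fintype.sum_sum_type, Finset.univ_unique, Finset.sum_singleton] at hsum
  rw [hapex, neighborSet_isolated, Set.ncard_singleton] at hsum
  simp only [hcopy, Finset.sum_const, Finset.card_univ, Fintype.card_fin, smul_eq_mul] at hsum
  omega

end ApexPlusIsolated

theorem apexPlusIsolated_saturated_general (m : ℕ) (H : SimpleGraph (Fin m))
    (hreg : ∀ v, (H.neighborSet v).ncard = 2)
    (hC4 : ∀ a b c d : Fin m, a ≠ c → b ≠ d →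
      H.Adj a b → H.Adj b c → H.Adj c d → H.Adj d a → False) :
    K23Saturated (apexPlusIsolated H) ∧
      (apexPlusIsolated H).edgeSet.ncard = 2 * (m + 2) - 3 := by
  refine ⟨⟨ApexPlusIsolated.not_hasK23 (fun v => (hreg v).le) hC4,
    fun _ _ => ApexPlusIsolated.hasK23_sup_edge_of_not_adj (fun v => (hreg v).ge)⟩, ?_⟩
  rw [ApexPlusIsolated.ncard_edgeSet hreg]
  omega

theorem apexPlusIsolated_saturated (m : ℕ) (hm : 3 ≤ m) (H : SimpleGraph (Fin m))
    (hreg : ∀ v, (H.neighborSet v).ncard = 2)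
    (hC4 : ∀ a b c d : Fin m, a ≠ c → b ≠ d →
      H.Adj a b → H.Adj b c → H.Adj c d → H.Adj d a → False) :
    K23Saturated (apexPlusIsolated H) ∧
      (apexPlusIsolated H).edgeSet.ncard = 2 * (m + 2) - 3 :=
  apexPlusIsolated_saturated_general m H hreg hC4
end

section
/- Let G be a K_{2,3}-saturated graph with minimum degree 3 in which every degree-3 vertex has a triangle as its neighborhood, and let α₁, α₂ be distinct non-adjacent vertices of degree 3. Then α₁ and α₂ have exactly one common neighbor. -/
open SimpleGraph

/-!
Let `p` have degree 3 with a triangle as neighbourhood in a `K_{2,3}`-free graph. A vertex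
`y ≠ p` sharing two neighbours `b, c` with `p` is adjacent to `p`: otherwise `b, c` would have
the three common neighbours `p`, `y` and the third neighbour of `p`. Two common neighbours of the
non-adjacent `α₁, α₂` would thus force `α₁ ~ α₂`. Conversely, the `K_{2,3}` created by adding
`α₁α₂` uses that edge, say with `α₁` on its side of size two; the other vertex `y` on that side is
adjacent to `α₂` and shares two neighbours with `α₁`, so it is a common neighbour.
-/

namespace SimpleGraph

variable {V : Type*} {G : SimpleGraph V}

open Finset in
theorem hasK23_iff_exists_isCompleteBetween :
    HasK23 G ↔ ∃ L R : Finset V, #L = 2 ∧ #R = 3 ∧ G.IsCompleteBetween L R := by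
  refine Iff.trans ?_ (completeBipartiteGraph_isContained_iff (α := Fin 2) (β := Fin 3))
  exact ⟨fun ⟨f, hf⟩ => ⟨⟨⟨f, hf _ _⟩, f.injective⟩⟩,
    fun ⟨c⟩ => ⟨c.toEmbedding, fun _ _ h => c.toHom.map_adj h⟩⟩

theorem hasK23_of_adj_s16 {x y a b c : V} (hxy : x ≠ y) (hab : a ≠ b) (hac : a ≠ c) (hbc : b ≠ c)
    (hxa : G.Adj x a) (hxb : G.Adj x b) (hxc : G.Adj x c)
    (hya : G.Adj y a) (hyb : G.Adj y b) (hyc : G.Adj y c) : HasK23 G := by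
  classical
  refine hasK23_iff_exists_isCompleteBetween.2 ⟨{x, y}, {a, b, c}, Finset.card_pair hxy,
    Finset.card_eq_three.2 ⟨a, b, c, hab, hac, hbc, rfl⟩, ?_⟩
  simp only [IsCompleteBetween, Finset.coe_insert, Finset.coe_singleton, Set.mem_insert_iff,
    Set.mem_singleton_iff]
  rintro _ (rfl | rfl) _ (rfl | rfl | rfl) <;> assumption

theorem adj_of_sup_edge_adj_s16 {u v a b : V} (h : (G ⊔ edge u v).Adj a b) (hab : s(a, b) ≠ s(u, v)) :
    G.Adj a b :=
  ((sup_adj _ _ _ _).1 h).resolve_right fun he => hab ((adj_edge _ _).1 he).1.symm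

open Finset in
theorem exists_of_hasK23_sup_edge {u v : V} (hG : ¬ HasK23 G) (h : HasK23 (G ⊔ edge u v)) :
    ∃ p q y b c, s(p, q) = s(u, v) ∧ y ≠ p ∧ G.Adj q y ∧ b ≠ c ∧
      b ∈ G.commonNeighbors p y ∧ c ∈ G.commonNeighbors p y := by
  classical
  obtain ⟨L, R, hL, hR, hLR⟩ := hasK23_iff_exists_isCompleteBetween.1 h
  obtain ⟨p, hp, q, hq, hpq⟩ : ∃ p ∈ L, ∃ q ∈ R, ¬ G.Adj p q := by
    by_contra! hall
    exact hG (hasK23_iff_exists_isCompleteBetween.2 ⟨L, R, hL, hR, fun p hp q hq => hall p hp q hq⟩)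
  -- as `G` is `K_{2,3}`-free, some edge `pq` of the copy is the added one; the other left vertex
  -- `y` is then joined to all of `R` and `p` to the two right vertices `b`, `c` other than `q`
  have hedge : s(p, q) = s(u, v) := by_contra fun hne => hpq (adj_of_sup_edge_adj_s16 (hLR hp hq) hne)
  obtain ⟨y, hy⟩ := card_eq_one.1 (show #(L.erase p) = 1 by rw [card_erase_of_mem hp, hL])
  obtain ⟨b, c, hbc, hbc'⟩ :=
    card_eq_two.1 (show #(R.erase q) = 2 by rw [card_erase_of_mem hq, hR])
  have hyL : y ∈ L.erase p := hy ▸ mem_singleton_self y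
  have hbR : b ∈ R.erase q := hbc' ▸ by simp
  have hcR : c ∈ R.erase q := hbc' ▸ by simp
  have hyq : y ≠ q := (hLR (mem_of_mem_erase hyL) hq).ne
  have hyR : ∀ r ∈ R, G.Adj y r := fun r hr =>
    adj_of_sup_edge_adj_s16 (hLR (mem_of_mem_erase hyL) hr)
      (by rw [← hedge]; simp [ne_of_mem_erase hyL, hyq])
  have hpR : ∀ r ∈ R.erase q, G.Adj p r := fun r hr =>
    adj_of_sup_edge_adj_s16 (hLR hp (mem_of_mem_erase hr))
      (by rw [← hedge]; simp [ne_of_mem_erase hr, (hLR hp hq).ne])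
  exact ⟨p, q, y, b, c, hedge, ne_of_mem_erase hyL, (hyR q hq).symm, hbc,
    ⟨hpR b hbR, hyR b (mem_of_mem_erase hbR)⟩, ⟨hpR c hcR, hyR c (mem_of_mem_erase hcR)⟩⟩

theorem adj_of_mem_commonNeighbors {p y b c : V} (hG : ¬ HasK23 G)
    (hdeg : (G.neighborSet p).ncard = 3) (hclique : G.IsClique (G.neighborSet p))
    (hyp : y ≠ p) (hbc : b ≠ c) (hb : b ∈ G.commonNeighbors p y)
    (hc : c ∈ G.commonNeighbors p y) : G.Adj p y := by
  obtain ⟨z, hz, hzbc⟩ := Set.exists_mem_notMem_of_ncard_lt_ncard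
    (show ({b, c} : Set V).ncard < (G.neighborSet p).ncard by rw [Set.ncard_pair hbc, hdeg]; simp)
  simp only [Set.mem_insert_iff, Set.mem_singleton_iff, not_or] at hzbc
  by_contra hpy
  have hyz : y ≠ z := fun h => hpy (h ▸ hz)
  exact hG (hasK23_of_adj_s16 hbc hyp.symm (G.ne_of_adj hz) hyz hb.1.symm hb.2.symm
    (hclique hb.1 hz (Ne.symm hzbc.1)) hc.1.symm hc.2.symm (hclique hc.1 hz (Ne.symm hzbc.2)))

theorem commonNeighbors_subsingleton_of_not_adj {u v : V} (hG : ¬ HasK23 G)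
    (hu : (G.neighborSet u).ncard = 3) (hclique : G.IsClique (G.neighborSet u))
    (huv : u ≠ v) (hnadj : ¬ G.Adj u v) : (G.commonNeighbors u v).Subsingleton := by
  intro x hx x' hx'
  by_contra hxx'
  exact hnadj (adj_of_mem_commonNeighbors hG hu hclique huv.symm hxx' hx hx')

theorem commonNeighbors_nonempty_of_hasK23_sup_edge {u v : V} (hG : ¬ HasK23 G)
    (h : HasK23 (G ⊔ edge u v))
    (hu : (G.neighborSet u).ncard = 3) (hcu : G.IsClique (G.neighborSet u))
    (hv : (G.neighborSet v).ncard = 3) (hcv : G.IsClique (G.neighborSet v)) :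
    (G.commonNeighbors u v).Nonempty := by
  obtain ⟨p, q, y, b, c, hpq, hyp, hqy, hbc, hb, hc⟩ := exists_of_hasK23_sup_edge hG h
  rcases Sym2.eq_iff.1 hpq with ⟨rfl, rfl⟩ | ⟨rfl, rfl⟩
  · exact ⟨y, adj_of_mem_commonNeighbors hG hu hcu hyp hbc hb hc, hqy⟩
  · exact ⟨y, hqy, adj_of_mem_commonNeighbors hG hv hcv hyp hbc hb hc⟩

end SimpleGraph

theorem degree_three_unique_common_neighbor_general {V : Type*}
    (G : SimpleGraph V) (hG : K23Saturated G)
    (htri : ∀ v, (G.neighborSet v).ncard = 3 →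
      ∀ a ∈ G.neighborSet v, ∀ b ∈ G.neighborSet v, a ≠ b → G.Adj a b)
    (α₁ α₂ : V) (hne : α₁ ≠ α₂) (hnadj : ¬ G.Adj α₁ α₂)
    (h1 : (G.neighborSet α₁).ncard = 3) (h2 : (G.neighborSet α₂).ncard = 3) :
    (G.neighborSet α₁ ∩ G.neighborSet α₂).ncard = 1 := by
  have hclique : ∀ v, (G.neighborSet v).ncard = 3 → G.IsClique (G.neighborSet v) :=
    fun v hv _ ha _ hb hab => htri v hv _ ha _ hb hab
  obtain ⟨w, hw⟩ := commonNeighbors_nonempty_of_hasK23_sup_edge hG.1 (hG.2 α₁ α₂ hne hnadj)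
    h1 (hclique α₁ h1) h2 (hclique α₂ h2)
  have hsub := commonNeighbors_subsingleton_of_not_adj hG.1 h1 (hclique α₁ h1) hne hnadj
  exact Set.ncard_eq_one.2 ⟨w, hsub.eq_singleton_of_mem hw⟩

theorem degree_three_unique_common_neighbor {V : Type*} [Fintype V]
    (G : SimpleGraph V) (hG : K23Saturated G)
    (hmin : ∀ v, 3 ≤ (G.neighborSet v).ncard)
    (hex : ∃ v, (G.neighborSet v).ncard = 3)
    (htri : ∀ v, (G.neighborSet v).ncard = 3 →
      ∀ a ∈ G.neighborSet v, ∀ b ∈ G.neighborSet v, a ≠ b → G.Adj a b)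
    (α₁ α₂ : V) (hne : α₁ ≠ α₂) (hnadj : ¬ G.Adj α₁ α₂)
    (h1 : (G.neighborSet α₁).ncard = 3) (h2 : (G.neighborSet α₂).ncard = 3) :
    (G.neighborSet α₁ ∩ G.neighborSet α₂).ncard = 1 :=
  degree_three_unique_common_neighbor_general G hG htri α₁ α₂ hne hnadj h1 h2
end

section
/- Let G be a K_{2,3}-saturated graph and let α be a vertex of degree 2 with N(α) = {x₁, x₂}, x₁ not adjacent to x₂, and N(x₁) ∩ N(x₂) = {α}. Then for every vertex y ∉ N[α] with exactly one neighbor in N(α), y has at least three edges counted with weight: |N(y) ∩ (N[α] ∪ {v : |N(v) ∩ N(α)| = 2})| + 0.5·|N(y) ∩ U₂| ≥ 1.5, where U₂ is the set of vertices outside N[α] ∪ {v : |N(v) ∩ N(α)| = 2} having exactly one neighbor in N(α). -/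
/-!
Adding the non-edge `yα` creates a `K_{2,3}` through it. If `α` were on the side of size two,
the other vertex of that side would be a second common neighbour of `x₁` and `x₂`. So `y` is on
that side and its partner `w` is a neighbour of `α`; the two remaining vertices on the side of
size three are neighbours of both `y` and `w`, hence have a neighbour in `N(α)` and lie in
`V₁ ∪ U₂`. With the neighbour of `y` in `N(α)`, which lies in `V₁`, this gives
`|N(y) ∩ V₁| ≥ 1` and `|N(y) ∩ V₁| + |N(y) ∩ U₂| ≥ 2`.
-/

open SimpleGraph

section

variable {V : Type*} {G : SimpleGraph V}

/-- `{p, w}` and `{q, c, d}` are the two sides of the `K_{2,3}` created by adding `uv = pq`. -/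
theorem K23Saturated.exists_K23_minus_edge_of_not_adj (hG : K23Saturated G) {u v : V}
    (huv : u ≠ v) (hadj : ¬ G.Adj u v) :
    ∃ p q w c d : V, s(p, q) = s(u, v) ∧ w ≠ p ∧ c ≠ d ∧
      G.Adj w q ∧ G.Adj p c ∧ G.Adj p d ∧ G.Adj w c ∧ G.Adj w d := by
  obtain ⟨f, hf⟩ := hG.2 u v huv hadj
  have hK : ∀ i j, (completeBipartiteGraph (Fin 2) (Fin 3)).Adj (.inl i) (.inr j) := by simp
  obtain ⟨i, j, hmissing⟩ : ∃ i j, ¬ G.Adj (f (.inl i)) (f (.inr j)) := by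
    by_contra! h
    refine hG.1 ⟨f, ?_⟩
    rintro (a | a) (b | b) hab
    · simp at hab
    · exact h a b
    · exact (h b a).symm
    · simp at hab
  have hnew : s(f (.inl i), f (.inr j)) = s(u, v) := by
    simpa [hmissing] using hf _ _ (hK i j)
  have hold : ∀ i' j', (i', j') ≠ (i, j) → G.Adj (f (.inl i')) (f (.inr j')) := by
    intro i' j' hne
    refine ((sup_adj ..).mp (hf _ _ (hK i' j'))).resolve_right fun h => hne ?_
    rw [fromEdgeSet_adj, Set.mem_singleton_iff, ← hnew] at h
    simpa [f.injective.eq_iff] using h.1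
  have h2 : ∀ k : Fin 2, k + 1 ≠ k := by decide
  have h3 : ∀ k : Fin 3, k + 1 ≠ k ∧ k + 2 ≠ k ∧ k + 1 ≠ k + 2 := by decide
  refine ⟨f (.inl i), f (.inr j), f (.inl (i + 1)), f (.inr (j + 1)), f (.inr (j + 2)), hnew,
    f.injective.ne (by simp [h2 i]), f.injective.ne (by simp [(h3 j).2.2]), ?_, ?_, ?_, ?_, ?_⟩ <;>
    apply hold <;> simp [h2 i, (h3 j).1, (h3 j).2.1]

theorem SimpleGraph.eq_of_adj_of_adj_of_neighborSet_eq_pair {α x₁ x₂ w c d : V}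
    (hN : G.neighborSet α = {x₁, x₂}) (hcommon : G.neighborSet x₁ ∩ G.neighborSet x₂ = {α})
    (hcd : c ≠ d) (hc : G.Adj α c) (hd : G.Adj α d) (hwc : G.Adj w c) (hwd : G.Adj w d) :
    w = α := by
  have hc' : c ∈ G.neighborSet α := hc
  have hd' : d ∈ G.neighborSet α := hd
  rw [hN] at hc' hd'
  have hw : w ∈ G.neighborSet x₁ ∩ G.neighborSet x₂ := by
    rcases hc' with rfl | rfl <;> rcases hd' with rfl | rfl
    · exact absurd rfl hcd
    · exact ⟨hwc.symm, hwd.symm⟩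
    · exact ⟨hwd.symm, hwc.symm⟩
    · exact absurd rfl hcd
  simpa [hcommon] using hw

theorem SimpleGraph.ncard_neighborSet_inter_eq_one_or_two [Finite V] {S : Set V}
    (hS : S.ncard ≤ 2) {z b : V} (hb : b ∈ S) (hzb : G.Adj z b) :
    (G.neighborSet z ∩ S).ncard = 1 ∨ (G.neighborSet z ∩ S).ncard = 2 := by
  have hpos : 0 < (G.neighborSet z ∩ S).ncard := (Set.ncard_pos).mpr ⟨b, hzb, hb⟩
  have hle : (G.neighborSet z ∩ S).ncard ≤ 2 :=
    (Set.ncard_le_ncard Set.inter_subset_right).trans hS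
  omega

end

theorem weight_lower_bound_degree_two_general {V : Type*} [Fintype V]
    (G : SimpleGraph V) (hG : K23Saturated G) (α x₁ x₂ : V)
    (hN : G.neighborSet α = {x₁, x₂})
    (hcommon : G.neighborSet x₁ ∩ G.neighborSet x₂ = {α})
    (V₁ U₂ : Set V)
    (hV₁ : V₁ = insert α (G.neighborSet α) ∪
      {v | (G.neighborSet v ∩ G.neighborSet α).ncard = 2})
    (hU₂ : U₂ = {v | v ∉ V₁ ∧ (G.neighborSet v ∩ G.neighborSet α).ncard = 1})
    (y : V) (hy : y ∉ insert α (G.neighborSet α))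
    (hy1 : (G.neighborSet y ∩ G.neighborSet α).ncard = 1) :
    (1.5 : ℝ) ≤ ((G.neighborSet y ∩ V₁).ncard : ℝ)
      + 0.5 * ((G.neighborSet y ∩ U₂).ncard : ℝ) := by
  have hNα : (G.neighborSet α).ncard ≤ 2 := by
    rw [hN]; exact (Set.ncard_insert_le _ _).trans (by rw [Set.ncard_singleton])
  have hclass : ∀ z b, G.Adj α b → G.Adj z b → z ∈ V₁ ∪ U₂ := by
    intro z b hb hzb
    rcases ncard_neighborSet_inter_eq_one_or_two hNα hb hzb with h | h
    · by_cases hz : z ∈ V₁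
      · exact .inl hz
      · exact .inr (hU₂ ▸ ⟨hz, h⟩)
    · exact .inl (hV₁ ▸ .inr h)
  have hone : 1 ≤ (G.neighborSet y ∩ V₁).ncard := by
    obtain ⟨x, hxy, hxα⟩ := Set.nonempty_of_ncard_ne_zero (hy1 ▸ one_ne_zero)
    exact (Set.ncard_pos).mpr ⟨x, hxy, hV₁ ▸ .inl (.inr hxα)⟩
  simp only [Set.mem_insert_iff, mem_neighborSet, not_or] at hy
  obtain ⟨p, q, w, c, d, hpq, hwp, hcd, hwq, hpc, hpd, hwc, hwd⟩ :=
    hG.exists_K23_minus_edge_of_not_adj hy.1 fun h => hy.2 h.symm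
  obtain ⟨rfl, rfl⟩ | ⟨rfl, rfl⟩ := Sym2.eq_iff.mp hpq.symm
  · have htwo : 2 ≤ (G.neighborSet y ∩ V₁).ncard + (G.neighborSet y ∩ U₂).ncard :=
      calc 2 = ({c, d} : Set V).ncard := (Set.ncard_pair hcd).symm
        _ ≤ (G.neighborSet y ∩ (V₁ ∪ U₂)).ncard := by
          refine Set.ncard_le_ncard ?_
          rintro z (rfl | rfl)
          exacts [⟨hpc, hclass z w hwq.symm hwc.symm⟩, ⟨hpd, hclass z w hwq.symm hwd.symm⟩]
        _ ≤ _ := Set.inter_union_distrib_left .. ▸ Set.ncard_union_le _ _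
    rify at hone htwo
    linarith
  · exact absurd (eq_of_adj_of_adj_of_neighborSet_eq_pair hN hcommon hcd hpc hpd hwc hwd) hwp

theorem weight_lower_bound_degree_two {V : Type*} [Fintype V]
    (G : SimpleGraph V) (hG : K23Saturated G) (α x₁ x₂ : V)
    (hne : x₁ ≠ x₂) (hN : G.neighborSet α = {x₁, x₂})
    (hnadj : ¬ G.Adj x₁ x₂)
    (hcommon : G.neighborSet x₁ ∩ G.neighborSet x₂ = {α})
    (V₁ U₂ : Set V)
    (hV₁ : V₁ = insert α (G.neighborSet α) ∪
      {v | (G.neighborSet v ∩ G.neighborSet α).ncard = 2})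
    (hU₂ : U₂ = {v | v ∉ V₁ ∧ (G.neighborSet v ∩ G.neighborSet α).ncard = 1})
    (y : V) (hy : y ∉ insert α (G.neighborSet α))
    (hy1 : (G.neighborSet y ∩ G.neighborSet α).ncard = 1) :
    (1.5 : ℝ) ≤ ((G.neighborSet y ∩ V₁).ncard : ℝ)
      + 0.5 * ((G.neighborSet y ∩ U₂).ncard : ℝ) :=
  weight_lower_bound_degree_two_general G hG α x₁ x₂ hN hcommon V₁ U₂ hV₁ hU₂ y hy hy1
end
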